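/- arXiv:2212.07319 — 7 statements merged into one kernel-verified Lean document; each statement's English description precedes it below -/
import Mathlib

section
/- Let G = C(α_1,…,α_{2k}) be a C-graph with adjacency matrix A. Every real root of the characteristic polynomial of the quotient matrix Q_π(G) is also a root of the characteristic polynomial of A; that is, every eigenvalue of Q_π(G) is an eigenvalue of G. -/
open Matrix BigOperators
open scoped Classical

/-- The equivalence splitting off the last cell of `Σ j : Fin (m+1), Fin (α j)`. -/
def splitLast (α : ℕ → ℕ) (m : ℕ) :
    (Σ j : Fin (m + 1), Fin (α j.val)) ≃ (Σ j : Fin m, Fin (α j.val)) ⊕ Fin (α m) where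
  toFun x :=
    if h : x.1.val < m then Sum.inl ⟨⟨x.1.val, h⟩, x.2⟩
    else Sum.inr (Fin.cast (congrArg α
      (Nat.le_antisymm (Nat.lt_succ_iff.mp x.1.isLt) (Nat.le_of_not_lt h))) x.2)
  invFun x :=
    match x with
    | Sum.inl y => ⟨⟨y.1.val, Nat.lt_succ_of_lt y.1.isLt⟩, y.2⟩
    | Sum.inr a => ⟨⟨m, Nat.lt_succ_self m⟩, a⟩
  left_inv := by
    rintro ⟨⟨jv, hj⟩, a⟩
    by_cases h : jv < m
    · simp [h]
    · have hm : jv = m := Nat.le_antisymm (Nat.lt_succ_iff.mp hj) (Nat.le_of_not_lt h)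
      subst hm
      simp [h, Fin.cast]
  right_inv := by
    rintro (⟨⟨jv, hj⟩, a⟩ | a)
    · simp [hj]
    · simp [Fin.cast]

lemma splitLast_of_lt (α : ℕ → ℕ) (m iv : ℕ) (h1 : iv < m) (hi : iv < m + 1)
    (a : Fin (α iv)) : splitLast α m ⟨⟨iv, hi⟩, a⟩ = Sum.inl ⟨⟨iv, h1⟩, a⟩ := by
  simp [splitLast, h1]

lemma splitLast_last (α : ℕ → ℕ) (m : ℕ) (hi : m < m + 1) (a : Fin (α m)) :
    splitLast α m ⟨⟨m, hi⟩, a⟩ = Sum.inr ⟨a.val, a.isLt⟩ := by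
  simp [splitLast, lt_irrefl, Fin.cast]

/-- The cograph `C(α 0, α 1, …, α (m-1))` (1-indexed in the paper: `C(α_1,…,α_m)`),
defined recursively: `C(α_1)` is the complement of the complete graph `K_{α_1}`, and
`C(α_1,…,α_i)` is the complement of the disjoint union of `C(α_1,…,α_{i-1})` and `K_{α_i}`.
The vertices added at step `j` (the cell `C_j`) are the pairs `⟨j, a⟩`. -/
def cographC (α : ℕ → ℕ) : (m : ℕ) → SimpleGraph (Σ j : Fin m, Fin (α j.val))
  | 0 => ⊥
  | m + 1 =>
      SimpleGraph.comap (splitLast α m)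
        ((cographC α m ⊕g (⊤ : SimpleGraph (Fin (α m))))ᶜ)

lemma sigma_eq_iff {α : ℕ → ℕ} {m iv jv : ℕ} (hi : iv < m) (hj : jv < m)
    (a : Fin (α iv)) (b : Fin (α jv)) :
    (⟨⟨iv, hi⟩, a⟩ : Σ j : Fin m, Fin (α j.val)) = ⟨⟨jv, hj⟩, b⟩ ↔ iv = jv ∧ a.val = b.val := by
  constructor
  · intro h
    obtain ⟨h1, h2⟩ := Sigma.mk.inj_iff.mp h
    have hij : iv = jv := Fin.mk.inj_iff.mp h1
    subst hij
    exact ⟨rfl, congrArg Fin.val (eq_of_heq h2)⟩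
  · rintro ⟨rfl, h2⟩
    have : a = b := Fin.ext h2
    subst this
    rfl

lemma cograph_adj (α : ℕ → ℕ) (m : ℕ) (iv jv : ℕ) (hi : iv < m) (hj : jv < m)
    (a : Fin (α iv)) (b : Fin (α jv)) :
    (cographC α m).Adj ⟨⟨iv, hi⟩, a⟩ ⟨⟨jv, hj⟩, b⟩ ↔
      (iv = jv ∧ a.val ≠ b.val ∧ Odd (m - iv - 1)) ∨
        (iv ≠ jv ∧ Even (m - max iv jv - 1)) := by
  induction m generalizing iv jv with
  | zero => exact absurd hi (Nat.not_lt_zero _)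
  | succ m ih =>
    show ((cographC α m ⊕g (⊤ : SimpleGraph (Fin (α m))))ᶜ).Adj
      (splitLast α m ⟨⟨iv, hi⟩, a⟩) (splitLast α m ⟨⟨jv, hj⟩, b⟩) ↔ _
    by_cases h1 : iv < m <;> by_cases h2 : jv < m
    · rw [splitLast_of_lt α m iv h1 hi a, splitLast_of_lt α m jv h2 hj b,
        SimpleGraph.compl_adj]
      have hne : (Sum.inl ⟨⟨iv, h1⟩, a⟩ : (Σ j : Fin m, Fin (α j.val)) ⊕ Fin (α m)) ≠
          Sum.inl ⟨⟨jv, h2⟩, b⟩ ↔ ¬(iv = jv ∧ a.val = b.val) := by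
        rw [ne_eq, Sum.inl.inj_iff, sigma_eq_iff]
      have hadj : (cographC α m ⊕g (⊤ : SimpleGraph (Fin (α m)))).Adj
          (Sum.inl ⟨⟨iv, h1⟩, a⟩) (Sum.inl ⟨⟨jv, h2⟩, b⟩) ↔
          (cographC α m).Adj ⟨⟨iv, h1⟩, a⟩ ⟨⟨jv, h2⟩, b⟩ := by
        simp [SimpleGraph.sum]
      rw [hne, hadj, ih iv jv h1 h2 a b]
      have p1 : Odd (m + 1 - iv - 1) ↔ ¬ Odd (m - iv - 1) := by
        have : m + 1 - iv - 1 = (m - iv - 1) + 1 := by omega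
        rw [this, Nat.odd_add_one, Nat.not_odd_iff_even]
      have p2 : Even (m + 1 - max iv jv - 1) ↔ ¬ Even (m - max iv jv - 1) := by
        have : m + 1 - max iv jv - 1 = (m - max iv jv - 1) + 1 := by omega
        rw [this, Nat.even_add_one]
      rw [p1, p2]
      by_cases hij : iv = jv
      · subst hij
        by_cases hab : a.val = b.val <;> simp [hab] <;> tauto
      · simp [hij]
    · have hjm : jv = m := by omega
      subst hjm
      rw [splitLast_of_lt α jv iv h1 hi a, splitLast_last α jv hj b, SimpleGraph.compl_adj]
      have : (cographC α jv ⊕g (⊤ : SimpleGraph (Fin (α jv)))).Adj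
          (Sum.inl ⟨⟨iv, h1⟩, a⟩) (Sum.inr ⟨b.val, b.isLt⟩) ↔ False := by
        simp [SimpleGraph.sum]
      rw [this]
      have hmm : jv + 1 - max iv jv - 1 = 0 := by omega
      simp [hmm, show iv ≠ jv by omega]
    · have him : iv = m := by omega
      subst him
      rw [splitLast_of_lt α iv jv h2 hj b, splitLast_last α iv hi a, SimpleGraph.compl_adj]
      have : (cographC α iv ⊕g (⊤ : SimpleGraph (Fin (α iv)))).Adj
          (Sum.inr ⟨a.val, a.isLt⟩) (Sum.inl ⟨⟨jv, h2⟩, b⟩) ↔ False := by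
        simp [SimpleGraph.sum]
      rw [this]
      have hmm : iv + 1 - max iv jv - 1 = 0 := by omega
      simp [hmm, show iv ≠ jv by omega]
    · have him : iv = m := by omega
      have hjm : jv = m := by omega
      subst him
      subst hjm
      rw [splitLast_last α jv hi a, splitLast_last α jv hj b, SimpleGraph.compl_adj]
      have : (cographC α jv ⊕g (⊤ : SimpleGraph (Fin (α jv)))).Adj
          (Sum.inr ⟨a.val, a.isLt⟩) (Sum.inr ⟨b.val, b.isLt⟩) ↔
          (⟨a.val, a.isLt⟩ : Fin (α jv)) ≠ ⟨b.val, b.isLt⟩ := by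
        simp [SimpleGraph.sum]
      rw [this]
      have hmm : jv + 1 - jv - 1 = 0 := by omega
      simp [hmm, Fin.ext_iff]

/-- The real adjacency matrix of a finite simple graph. -/
noncomputable def adjMat {V : Type*} [Fintype V] (G : SimpleGraph V) : Matrix V V ℝ :=
  Matrix.of fun u v => if G.Adj u v then (1 : ℝ) else 0

/-- The quotient matrix `Q_π(G)` of the C-graph `C(α 0, …, α (2k-1))`.  Rows and columns are
indexed by `Fin (2*k)`; the paper's 1-based index `i` corresponds to `i.val + 1` here. -/
def quotientMatrix (α : ℕ → ℕ) (k : ℕ) : Matrix (Fin (2 * k)) (Fin (2 * k)) ℝ :=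
  Matrix.of fun i j =>
    if i = j then (if Odd (i.val + 1) then (α i.val : ℝ) - 1 else 0)
    else if (Even (i.val + 1) ∧ j.val < i.val) ∨ (Even (j.val + 1) ∧ i.val < j.val)
      then (α j.val : ℝ) else 0

lemma charpoly_eval {n : Type*} [DecidableEq n] [Fintype n] {R : Type*} [CommRing R]
    (M : Matrix n n R) (x : R) :
    M.charpoly.eval x = (x • (1 : Matrix n n R) - M).det := by
  rw [Matrix.charpoly, ← Polynomial.coe_evalRingHom, RingHom.map_det]
  congr 1
  ext i j
  by_cases h : i = j
  · subst h
    simp [Matrix.charmatrix_apply_eq, Matrix.one_apply]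
  · simp [Matrix.charmatrix_apply_ne _ _ _ h, Matrix.one_apply_ne h]

lemma cell_sum (α : ℕ → ℕ) (k : ℕ) (i j : Fin (2 * k)) (a : Fin (α i.val)) :
    ∑ b : Fin (α j.val), adjMat (cographC α (2 * k)) ⟨i, a⟩ ⟨j, b⟩
      = quotientMatrix α k i j := by
  rcases i with ⟨iv, hi⟩
  rcases j with ⟨jv, hj⟩
  simp only [adjMat, Matrix.of_apply]
  by_cases hij : iv = jv
  · subst hij
    have hQ : quotientMatrix α k ⟨iv, hi⟩ ⟨iv, hj⟩ =
        if Odd (iv + 1) then (α iv : ℝ) - 1 else 0 := by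
      simp [quotientMatrix]
    rw [hQ]
    by_cases ho : Odd (iv + 1)
    · have hpar : Odd (2 * k - iv - 1) := by
        rw [Nat.odd_iff] at ho ⊢; omega
      have he : ∀ b : Fin (α iv),
          (if (cographC α (2 * k)).Adj ⟨⟨iv, hi⟩, a⟩ ⟨⟨iv, hj⟩, b⟩ then (1:ℝ) else 0)
            = 1 - if a = b then 1 else 0 := by
        intro b
        rw [cograph_adj]
        by_cases hab : a = b
        · subst hab; simp [hpar]
        · have : a.val ≠ b.val := fun h => hab (Fin.ext h)
          simp [hab, this, hpar]
      rw [Finset.sum_congr rfl fun b _ => he b, Finset.sum_sub_distrib]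
      simp [ho, Finset.sum_ite_eq]
    · have hpar : ¬ Odd (2 * k - iv - 1) := by
        rw [Nat.odd_iff] at ho ⊢; omega
      have he : ∀ b : Fin (α iv),
          (if (cographC α (2 * k)).Adj ⟨⟨iv, hi⟩, a⟩ ⟨⟨iv, hj⟩, b⟩ then (1:ℝ) else 0) = 0 := by
        intro b
        rw [cograph_adj]
        simp [hpar]
      rw [Finset.sum_congr rfl fun b _ => he b]
      simp [ho]
  · have hQ : quotientMatrix α k ⟨iv, hi⟩ ⟨jv, hj⟩ =
        if Even (max iv jv + 1) then (α jv : ℝ) else 0 := by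
      have hne : (⟨iv, hi⟩ : Fin (2 * k)) ≠ ⟨jv, hj⟩ := by
        simp [Fin.ext_iff]; omega
      simp only [quotientMatrix, Matrix.of_apply, if_neg hne]
      congr 1
      rcases Nat.lt_or_ge iv jv with h | h
      · simp only [eq_iff_iff]
        constructor
        · rintro (⟨_, h'⟩ | ⟨he, _⟩)
          · omega
          · rwa [max_eq_right (le_of_lt h)]
        · intro he
          exact Or.inr ⟨by rwa [max_eq_right (le_of_lt h)] at he, h⟩
      · have hlt : jv < iv := by omega
        simp only [eq_iff_iff]
        constructor
        · rintro (⟨he, _⟩ | ⟨_, h'⟩)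
          · rwa [max_eq_left (le_of_lt hlt)]
          · omega
        · intro he
          exact Or.inl ⟨by rwa [max_eq_left (le_of_lt hlt)] at he, hlt⟩
    rw [hQ]
    by_cases hev : Even (max iv jv + 1)
    · have hpar : Even (2 * k - max iv jv - 1) := by
        rw [Nat.even_iff] at hev ⊢
        have : max iv jv < 2 * k := by omega
        omega
      have he : ∀ b : Fin (α jv),
          (if (cographC α (2 * k)).Adj ⟨⟨iv, hi⟩, a⟩ ⟨⟨jv, hj⟩, b⟩ then (1:ℝ) else 0) = 1 := by
        intro b
        rw [cograph_adj]
        simp [hij, hpar]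
      rw [Finset.sum_congr rfl fun b _ => he b]
      simp [hev]
    · have hpar : ¬ Even (2 * k - max iv jv - 1) := by
        rw [Nat.even_iff] at hev ⊢
        have : max iv jv < 2 * k := by omega
        omega
      have he : ∀ b : Fin (α jv),
          (if (cographC α (2 * k)).Adj ⟨⟨iv, hi⟩, a⟩ ⟨⟨jv, hj⟩, b⟩ then (1:ℝ) else 0) = 0 := by
        intro b
        rw [cograph_adj]
        simp [hij, hpar]
      rw [Finset.sum_congr rfl fun b _ => he b]
      simp [hev]

/-- every real root of the characteristic polynomial of `Q_π(G)` is a root of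
the characteristic polynomial of the adjacency matrix of `G`. -/
theorem stmt4 (k : ℕ) (hk : 1 ≤ k) (α : ℕ → ℕ) (hα : ∀ i < 2 * k, 0 < α i) (x : ℝ)
    (hx : (quotientMatrix α k).charpoly.IsRoot x) :
    (adjMat (cographC α (2 * k))).charpoly.IsRoot x := by
  rw [Polynomial.IsRoot, charpoly_eval] at hx
  obtain ⟨v, hv0, hv⟩ := (Matrix.exists_mulVec_eq_zero_iff).mpr hx
  have hQv : (quotientMatrix α k).mulVec v = x • v := by
    rw [Matrix.sub_mulVec, Matrix.smul_mulVec, Matrix.one_mulVec, sub_eq_zero] at hv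
    exact hv.symm
  set A := adjMat (cographC α (2 * k)) with hA
  set w : (Σ j : Fin (2 * k), Fin (α j.val)) → ℝ := fun u => v u.1 with hw
  have hw0 : w ≠ 0 := by
    intro h
    apply hv0
    funext j
    have hj : 0 < α j.val := hα j.val j.isLt
    have := congrFun h ⟨j, ⟨0, hj⟩⟩
    simpa [hw] using this
  have hAw : A.mulVec w = x • w := by
    funext u
    rcases u with ⟨i, a⟩
    have : A.mulVec w ⟨i, a⟩ = ∑ p : Σ j : Fin (2 * k), Fin (α j.val), A ⟨i, a⟩ p * v p.1 := by
      simp [Matrix.mulVec, dotProduct, hw]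
    rw [this, ← Finset.univ_sigma_univ, Finset.sum_sigma]
    have : ∀ j : Fin (2 * k), ∑ b : Fin (α j.val), A ⟨i, a⟩ ⟨j, b⟩ * v j
        = quotientMatrix α k i j * v j := by
      intro j
      rw [← Finset.sum_mul, cell_sum]
    rw [Finset.sum_congr rfl fun j _ => this j]
    have : ∑ j : Fin (2 * k), quotientMatrix α k i j * v j = (quotientMatrix α k).mulVec v i := by
      simp [Matrix.mulVec, dotProduct]
    rw [this, hQv]
    simp [hw]
  rw [Polynomial.IsRoot, charpoly_eval]
  rw [← Matrix.exists_mulVec_eq_zero_iff]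
  refine ⟨w, hw0, ?_⟩
  rw [Matrix.sub_mulVec, Matrix.smul_mulVec, Matrix.one_mulVec, hAw, sub_self]
end

section
/- Let G = C(α_1,…,α_{2k}) be a C-graph. Then −1 is a root of the characteristic polynomial of the quotient matrix Q_π(G) if and only if α_2 = 1. Moreover, if α_2 = 1, then −1 is a simple root (multiplicity exactly one) of the characteristic polynomial of Q_π(G). -/
open Matrix BigOperators
open scoped Classical

/-!
Write `Q = quotientMatrix α k` and index from `0`, so that the paper's `α_2` is `α 1`.
Rows `0` and `1` of `Q + 1` coincide exactly when `α 1 = 1`; then subtracting them splits a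
factor `X + 1` off the characteristic polynomial, and the cofactor does not vanish at `-1`
because the only null vectors of `Q + 1` with `v 0 = v 1` are zero.

The null vectors of `Q + 1` are computed by a sum-of-squares argument. With the tail sums
`T s = ∑_{r ≥ s} α (2r+1) v (2r+1)`, the even rows say `α (2t) v (2t) = -T t`, and substituting
this into the odd rows leaves `(α (2t+1) - 1) v (2t+1) = -∑_{1 ≤ s ≤ t} T s`. Multiplying by
`α (2t+1) v (2t+1)` and summing over `t` gives
`∑ α (2t+1) (α (2t+1) - 1) v (2t+1) ^ 2 + ∑_{s ≥ 1} T s ^ 2 = 0`, so every `T s` with `s ≥ 1`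
vanishes. Hence a null vector is supported on the first two coordinates, where
`α 0 v 0 + α 1 v 1 = 0` and `(α 1 - 1) v 1 = 0`.
-/

open Polynomial Finset

theorem Finset.sum_range_two_mul {M : Type*} [AddCommMonoid M] (f : ℕ → M) (k : ℕ) :
    ∑ m ∈ range (2 * k), f m = ∑ r ∈ range k, (f (2 * r) + f (2 * r + 1)) := by
  induction k with
  | zero => simp
  | succ k ih => rw [Nat.mul_succ, sum_range_succ, sum_range_succ, sum_range_succ, ih, add_assoc]

theorem Finset.sum_range_mul_sum_tail_eq_sum_sq {R : Type*} [CommSemiring R] (y : ℕ → R) (k : ℕ) :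
    ∑ t ∈ range k, y t * ∑ s ∈ range t, ∑ r ∈ Ico (s + 1) k, y r =
      ∑ s ∈ range k, (∑ r ∈ Ico (s + 1) k, y r) ^ 2 := by
  set T : ℕ → R := fun s => ∑ r ∈ Ico (s + 1) k, y r
  calc ∑ t ∈ range k, y t * ∑ s ∈ range t, T s
      = ∑ t ∈ Ico 0 k, ∑ s ∈ Ico 0 t, T s * y t := by
        simp_rw [range_eq_Ico, mul_sum, mul_comm (y _)]
    _ = ∑ s ∈ Ico 0 k, ∑ t ∈ Ico (s + 1) k, T s * y t := (sum_Ico_Ico_comm' 0 k _).symm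
    _ = ∑ s ∈ range k, T s ^ 2 := by simp_rw [range_eq_Ico, ← mul_sum, sq]; rfl

theorem Finset.tail_sums_eq_zero_of_mul_nonneg {R : Type*} [CommRing R] [LinearOrder R]
    [IsStrictOrderedRing R] {k : ℕ} {y c : ℕ → R} (hyc : ∀ t < k, 0 ≤ y t * c t)
    (h : ∀ t < k, c t + ∑ s ∈ range t, ∑ r ∈ Ico (s + 1) k, y r = 0) (s : ℕ) :
    ∑ r ∈ Ico (s + 1) k, y r = 0 := by
  rcases lt_or_ge s k with hs | hs
  · have htotal :
        ∑ t ∈ range k, y t * c t + ∑ s ∈ range k, (∑ r ∈ Ico (s + 1) k, y r) ^ 2 = 0 := by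
      rw [← sum_range_mul_sum_tail_eq_sum_sq, ← sum_add_distrib]
      exact sum_eq_zero fun t ht => by rw [← mul_add, h t (mem_range.mp ht), mul_zero]
    have hsq := (add_eq_zero_iff_of_nonneg (sum_nonneg fun t ht => hyc t (mem_range.mp ht))
      (sum_nonneg fun s _ => sq_nonneg _)).mp htotal |>.2
    exact pow_eq_zero_iff two_ne_zero |>.mp <|
      (sum_eq_zero_iff_of_nonneg fun s _ => sq_nonneg _).mp hsq s (mem_range.mpr hs)
  · exact sum_eq_zero fun r hr => by simp at hr; omega

theorem Fin.sum_univ_two_mul {M : Type*} [AddCommMonoid M] {k : ℕ} (F : Fin (2 * k) → M) :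
    ∑ j, F j = ∑ r : Fin k, (F ⟨2 * r, by omega⟩ + F ⟨2 * r + 1, by omega⟩) := by
  rw [sum_fin_eq_sum_range, sum_fin_eq_sum_range, Finset.sum_range_two_mul]
  refine sum_congr rfl fun r hr => ?_
  have hr : r < k := mem_range.mp hr
  simp only [hr, dif_pos, show 2 * r < 2 * k by omega, show 2 * r + 1 < 2 * k by omega]

/-- The equations `(Q + 1) v = 0`, with `p`, `b` the weights and `e`, `g` the entries of `v` at
the even and odd positions. -/
theorem tail_eq_zero_of_kernel_equations {R : Type*} [CommRing R] [LinearOrder R]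
    [IsStrictOrderedRing R] {k : ℕ} {p e b g : ℕ → R} (hb : ∀ t < k, 1 ≤ b t)
    (heven : ∀ t < k, p t * e t + ∑ r ∈ Ico t k, b r * g r = 0)
    (hodd : ∀ t < k, ∑ r ∈ range (t + 1), p r * e r + ∑ r ∈ range k, b r * g r
      - (b t - 1) * g t = 0) (s : ℕ) :
    ∑ r ∈ Ico (s + 1) k, b r * g r = 0 := by
  refine Finset.tail_sums_eq_zero_of_mul_nonneg (c := fun t => (b t - 1) * g t)
    (fun t ht => ?_) (fun t ht => ?_) s
  · rw [show b t * g t * ((b t - 1) * g t) = b t * (b t - 1) * g t ^ 2 by ring]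
    have := hb t ht
    exact mul_nonneg (mul_nonneg (by linarith) (by linarith)) (sq_nonneg _)
  · have hpe : ∑ r ∈ range (t + 1), p r * e r =
        -∑ r ∈ range (t + 1), ∑ r' ∈ Ico r k, b r' * g r' := by
      rw [← sum_neg_distrib]
      exact sum_congr rfl fun r hr =>
        eq_neg_of_add_eq_zero_left (heven r (by rw [mem_range] at hr; omega))
    rw [sum_range_succ' (fun r => ∑ r' ∈ Ico r k, b r' * g r'), ← range_eq_Ico] at hpe
    linarith [hodd t ht]

namespace Matrix

variable {n K : Type*} [Fintype n] [DecidableEq n] [Field K]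

theorem isRoot_charpoly_iff_exists_mulVec_eq_zero (A : Matrix n n K) (μ : K) :
    A.charpoly.IsRoot μ ↔ ∃ v ≠ 0, (A - scalar n μ) *ᵥ v = 0 := by
  simp_rw [IsRoot, eval_charpoly, ← exists_mulVec_eq_zero_iff, ← neg_sub A, neg_mulVec,
    neg_eq_zero]

theorem rootMultiplicity_charpoly_eq_one (A : Matrix n n K) (μ : K) {i j : n} (hij : i ≠ j)
    (hrow : (A - scalar n μ) i = (A - scalar n μ) j)
    (hker : ∀ v, (A - scalar n μ) *ᵥ v = 0 → v i = v j → v = 0) :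
    A.charpoly.rootMultiplicity μ = 1 := by
  set B := A - scalar n μ
  set w : n → K := Pi.single i 1 - Pi.single j 1
  have hcharmatrix : charmatrix A = scalar n (X - C μ) - B.map C := by
    ext k l
    by_cases hkl : k = l
    · subst hkl; simp [B]
    · simp [B, hkl]
  have hcharmatrix_row (k : n) :
      charmatrix A k = (X - C μ) • (C ∘ Pi.single k 1) - C ∘ B k := by
    rw [hcharmatrix]
    funext l
    by_cases hkl : k = l
    · subst hkl; simp
    · simp [hkl, Ne.symm hkl]
  have hsub : charmatrix A i + (-1 : K[X]) • charmatrix A j = (X - C μ) • (C ∘ w) := by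
    funext l
    simp only [hcharmatrix_row, hrow, w, Pi.add_apply, Pi.sub_apply, Pi.smul_apply,
      Function.comp_apply, map_sub, smul_eq_mul]
    ring
  set q := (updateRow (charmatrix A) i (C ∘ w)).det
  have hfactor : A.charpoly = (X - C μ) * q := by
    rw [charpoly, ← det_updateRow_add_smul_self _ hij, hsub, det_updateRow_smul]
  have hq : q.eval μ ≠ 0 := by
    have heval : q.eval μ = (updateRow (-B) i w).det := by
      rw [← coe_evalRingHom, RingHom.map_det, RingHom.mapMatrix_apply, map_updateRow,
        hcharmatrix]
      congr 1
      ext k l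
      by_cases hk : k = i <;> by_cases hkl : k = l <;> simp [updateRow_apply, hk, hkl]
    rw [heval]
    intro hdet
    obtain ⟨v, hv0, hv⟩ := exists_mulVec_eq_zero_iff.mpr hdet
    have hrow_eq : ∀ l, l ≠ i → B l ⬝ᵥ v = 0 := fun l hl => by
      have := congrFun hv l
      rw [Pi.zero_apply, mulVec, updateRow_ne hl] at this
      exact neg_eq_zero.mp ((neg_dotProduct _ _).symm.trans this)
    refine hv0 (hker v (funext fun l => ?_) ?_)
    · by_cases hl : l = i
      · subst hl; simpa [mulVec, hrow] using hrow_eq j hij.symm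
      · exact hrow_eq l hl
    · have := congrFun hv i
      simp [mulVec, w, dotProduct, Pi.single_apply, sub_mul] at this
      linear_combination this
  rw [hfactor, mul_comm, ← pow_one (X - C μ), rootMultiplicity_mul_X_sub_C_pow
    (fun h => hq (by simp [h])), rootMultiplicity_eq_zero hq]

end Matrix

section QuotientMatrix

variable {α : ℕ → ℕ} {k t r : ℕ} {i j : Fin (2 * k)}

theorem quotientMatrix_add_one_apply_even_even (hi : i.val = 2 * t) (hj : j.val = 2 * r) :
    (quotientMatrix α k + 1) i j = if r = t then (α (2 * t) : ℝ) else 0 := by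
  simp only [quotientMatrix, Matrix.add_apply, one_apply, of_apply, Fin.ext_iff, hi, hj]
  split_ifs <;> grind

theorem quotientMatrix_add_one_apply_even_odd (hi : i.val = 2 * t) (hj : j.val = 2 * r + 1) :
    (quotientMatrix α k + 1) i j = if t ≤ r then (α (2 * r + 1) : ℝ) else 0 := by
  simp only [quotientMatrix, Matrix.add_apply, one_apply, of_apply, Fin.ext_iff, hi, hj]
  split_ifs <;> grind

theorem quotientMatrix_add_one_apply_odd_even (hi : i.val = 2 * t + 1) (hj : j.val = 2 * r) :
    (quotientMatrix α k + 1) i j = if r ≤ t then (α (2 * r) : ℝ) else 0 := by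
  simp only [quotientMatrix, Matrix.add_apply, one_apply, of_apply, Fin.ext_iff, hi, hj]
  split_ifs <;> grind

theorem quotientMatrix_add_one_apply_odd_odd (hi : i.val = 2 * t + 1) (hj : j.val = 2 * r + 1) :
    (quotientMatrix α k + 1) i j = if r = t then 1 else (α (2 * r + 1) : ℝ) := by
  simp only [quotientMatrix, Matrix.add_apply, one_apply, of_apply, Fin.ext_iff, hi, hj]
  split_ifs <;> grind

theorem quotientMatrix_add_one_mulVec_even (f : ℕ → ℝ) (hi : i.val = 2 * t) (ht : t < k) :
    ((quotientMatrix α k + 1) *ᵥ fun j : Fin (2 * k) => f j) i =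
      α (2 * t) * f (2 * t) + ∑ r ∈ Ico t k, α (2 * r + 1) * f (2 * r + 1) := by
  rw [mulVec, dotProduct, Fin.sum_univ_two_mul]
  calc _ = ∑ r ∈ range k, ((if r = t then (α (2 * t) : ℝ) else 0) * f (2 * r) +
        (if t ≤ r then (α (2 * r + 1) : ℝ) else 0) * f (2 * r + 1)) := by
        rw [← Fin.sum_univ_eq_sum_range]
        refine sum_congr rfl fun r _ => ?_
        rw [quotientMatrix_add_one_apply_even_even hi rfl,
          quotientMatrix_add_one_apply_even_odd hi rfl]
    _ = _ := by
        simp only [ite_mul, zero_mul, sum_add_distrib, sum_ite_eq', mem_range, ht, if_true]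
        rw [← sum_filter]
        congr 2
        ext r; simp; omega

theorem quotientMatrix_add_one_mulVec_odd (f : ℕ → ℝ) (hi : i.val = 2 * t + 1) (ht : t < k) :
    ((quotientMatrix α k + 1) *ᵥ fun j : Fin (2 * k) => f j) i =
      ∑ r ∈ range (t + 1), α (2 * r) * f (2 * r) + ∑ r ∈ range k, α (2 * r + 1) * f (2 * r + 1)
        - (α (2 * t + 1) - 1) * f (2 * t + 1) := by
  rw [mulVec, dotProduct, Fin.sum_univ_two_mul]
  calc _ = ∑ r ∈ range k, ((if r ≤ t then (α (2 * r) : ℝ) else 0) * f (2 * r) +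
        (if r = t then 1 else (α (2 * r + 1) : ℝ)) * f (2 * r + 1)) := by
        rw [← Fin.sum_univ_eq_sum_range]
        refine sum_congr rfl fun r _ => ?_
        rw [quotientMatrix_add_one_apply_odd_even hi rfl,
          quotientMatrix_add_one_apply_odd_odd hi rfl]
    _ = _ := by
        have hdiag : ∀ r, (if r = t then 1 else (α (2 * r + 1) : ℝ)) * f (2 * r + 1) =
            α (2 * r + 1) * f (2 * r + 1) -
              if r = t then (α (2 * t + 1) - 1) * f (2 * t + 1) else 0 := by
          intro r
          split_ifs with h
          · subst h; ring
          · ring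
        have hfilter : (range k).filter (· ≤ t) = range (t + 1) := by
          ext r; simp; omega
        simp only [hdiag, ite_mul, zero_mul, sum_add_distrib, sum_sub_distrib, sum_ite_eq',
          mem_range, ht, if_true]
        rw [← sum_filter, hfilter]
        ring

theorem quotientMatrix_add_one_kernel_support (hα : ∀ i < 2 * k, 0 < α i) (hk : 0 < k)
    {f : ℕ → ℝ} (hf : (quotientMatrix α k + 1) *ᵥ (fun j : Fin (2 * k) => f j) = 0) :
    (∀ m, 2 ≤ m → m < 2 * k → f m = 0) ∧ ((α 1 : ℝ) - 1) * f 1 = 0 ∧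
      α 0 * f 0 + α 1 * f 1 = 0 := by
  have heven (t : ℕ) (ht : t < k) :
      α (2 * t) * f (2 * t) + ∑ r ∈ Ico t k, α (2 * r + 1) * f (2 * r + 1) = 0 := by
    rw [← quotientMatrix_add_one_mulVec_even f (i := ⟨2 * t, by omega⟩) rfl ht, hf,
      Pi.zero_apply]
  have hodd (t : ℕ) (ht : t < k) :
      ∑ r ∈ range (t + 1), α (2 * r) * f (2 * r) + ∑ r ∈ range k, α (2 * r + 1) * f (2 * r + 1)
        - (α (2 * t + 1) - 1) * f (2 * t + 1) = 0 := by
    rw [← quotientMatrix_add_one_mulVec_odd f (i := ⟨2 * t + 1, by omega⟩) rfl ht, hf,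
      Pi.zero_apply]
  have htail : ∀ s, ∑ r ∈ Ico (s + 1) k, (α (2 * r + 1) : ℝ) * f (2 * r + 1) = 0 :=
    tail_eq_zero_of_kernel_equations
      (fun t ht => by exact_mod_cast hα (2 * t + 1) (by omega)) heven hodd
  have hsplit (t : ℕ) (ht : t < k) :=
    sum_eq_sum_Ico_succ_bot ht fun r => (α (2 * r + 1) : ℝ) * f (2 * r + 1)
  have hα_ne (m : ℕ) (hm : m < 2 * k) : (α m : ℝ) ≠ 0 := Nat.cast_ne_zero.mpr (hα m hm).ne'
  have heven0 := heven 0 hk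
  have hodd0 := hodd 0 hk
  simp only [Nat.mul_zero, zero_add, sum_range_one, ← range_eq_Ico] at heven0 hodd0
  refine ⟨fun m hm2 hmk => ?_, by linarith, ?_⟩
  · obtain ⟨t, ht⟩ : ∃ t, m / 2 = t + 1 := ⟨m / 2 - 1, by omega⟩
    have htk : t + 1 < k := by omega
    obtain rfl | rfl : m = 2 * (t + 1) ∨ m = 2 * (t + 1) + 1 := by omega
    · have hrow := heven (t + 1) htk
      rw [htail, add_zero] at hrow
      exact (mul_eq_zero.mp hrow).resolve_left (hα_ne _ hmk)
    · have hstep := hsplit (t + 1) htk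
      rw [htail, htail] at hstep
      exact (mul_eq_zero.mp (by linarith)).resolve_left (hα_ne _ hmk)
  · rw [← heven0, range_eq_Ico, hsplit 0 hk, htail 0]
    ring

theorem quotientMatrix_add_one_kernel (hα : ∀ i < 2 * k, 0 < α i) (hk : 0 < k)
    {v : Fin (2 * k) → ℝ} (hv : (quotientMatrix α k + 1) *ᵥ v = 0) :
    ((α 1 : ℝ) - 1) * v ⟨1, by omega⟩ = 0 ∧ α 0 * v ⟨0, by omega⟩ + α 1 * v ⟨1, by omega⟩ = 0 ∧
      (v ⟨1, by omega⟩ = 0 → v = 0) := by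
  set f : ℕ → ℝ := fun m => if h : m < 2 * k then v ⟨m, h⟩ else 0
  have hf (i : Fin (2 * k)) : v i = f i := by simp [f]
  obtain ⟨hsupport, hdiag, hrel⟩ :=
    quotientMatrix_add_one_kernel_support hα hk (f := f) (by simpa only [← hf] using hv)
  simp only [hf]
  refine ⟨hdiag, hrel, fun hv1 => funext fun i => ?_⟩
  rw [hf, Pi.zero_apply]
  rcases lt_or_ge i.val 2 with hi | hi
  · obtain hi | hi : i.val = 0 ∨ i.val = 1 := by omega
    · rw [hv1, mul_zero, add_zero] at hrel
      exact hi ▸ (mul_eq_zero.mp hrel).resolve_left (Nat.cast_ne_zero.mpr (hα 0 (by omega)).ne')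
    · exact hi ▸ hv1
  · exact hsupport i hi i.isLt

theorem quotientMatrix_add_one_row_zero_eq_row_one (hk : 0 < k) (h1 : α 1 = 1) :
    (quotientMatrix α k + 1) ⟨0, by omega⟩ = (quotientMatrix α k + 1) ⟨1, by omega⟩ := by
  funext j
  obtain ⟨r, hr | hr⟩ := Nat.even_or_odd' j.val
  · rw [quotientMatrix_add_one_apply_even_even (t := 0) rfl hr,
      quotientMatrix_add_one_apply_odd_even (t := 0) rfl hr]
    split_ifs <;> simp_all
  · rw [quotientMatrix_add_one_apply_even_odd (t := 0) rfl hr,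
      quotientMatrix_add_one_apply_odd_odd (t := 0) rfl hr]
    split_ifs <;> simp_all

end QuotientMatrix

/-- `-1` is a root of the characteristic polynomial of `Q_π(G)` iff `α_2 = 1`,
in which case it is a simple root. (Paper's `α_2` is `α 1` in our 0-based indexing.) -/
theorem stmt6 (k : ℕ) (hk : 1 ≤ k) (α : ℕ → ℕ) (hα : ∀ i < 2 * k, 0 < α i) :
    ((quotientMatrix α k).charpoly.IsRoot (-1) ↔ α 1 = 1) ∧
      (α 1 = 1 → (quotientMatrix α k).charpoly.rootMultiplicity (-1) = 1) := by
  have hshift : quotientMatrix α k - scalar _ (-1 : ℝ) = quotientMatrix α k + 1 := by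
    rw [map_neg, map_one, sub_neg_eq_add]
  have hmult (h1 : α 1 = 1) : (quotientMatrix α k).charpoly.rootMultiplicity (-1) = 1 := by
    refine rootMultiplicity_charpoly_eq_one _ _ (i := ⟨0, by omega⟩) (j := ⟨1, by omega⟩)
      (by simp [Fin.ext_iff]) (hshift ▸ quotientMatrix_add_one_row_zero_eq_row_one hk h1)
      fun v hv h01 => ?_
    obtain ⟨-, hrel, hzero⟩ := quotientMatrix_add_one_kernel hα hk (hshift ▸ hv)
    refine hzero ?_
    rw [h01, h1, Nat.cast_one, one_mul, ← add_one_mul] at hrel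
    exact (mul_eq_zero.mp hrel).resolve_left (by positivity)
  refine ⟨⟨fun hroot => ?_, fun h1 => ?_⟩, hmult⟩
  · obtain ⟨v, hv0, hv⟩ := (isRoot_charpoly_iff_exists_mulVec_eq_zero _ _).mp hroot
    obtain ⟨hdiag, -, hzero⟩ := quotientMatrix_add_one_kernel hα hk (hshift ▸ hv)
    by_contra hne
    refine hv0 (hzero ((mul_eq_zero.mp hdiag).resolve_left ?_))
    exact sub_ne_zero.mpr (by exact_mod_cast hne)
  · exact (rootMultiplicity_pos (charpoly_monic _).ne_zero).mp (by rw [hmult h1]; norm_num)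
end

section
/- Let G = C(α_1,…,α_{2k}) be a C-graph. Then 0 is never a root of the characteristic polynomial of the quotient matrix Q_π(G); equivalently, Q_π(G) is a nonsingular matrix. -/
open Matrix BigOperators
open scoped Classical

/-- The entry function of the quotient matrix, on natural-number indices. -/
noncomputable def Fent (α : ℕ → ℕ) (i j : ℕ) : ℝ :=
  if i = j then (if Odd (i + 1) then (α i : ℝ) - 1 else 0)
  else if (Even (i + 1) ∧ j < i) ∨ (Even (j + 1) ∧ i < j) then (α j : ℝ) else 0

lemma Fent_entry (α : ℕ → ℕ) (k : ℕ) (i j : Fin (2 * k)) :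
    quotientMatrix α k i j = Fent α i.val j.val := by
  simp only [quotientMatrix, Matrix.of_apply, Fent, Fin.ext_iff]

lemma Fent_ee (α : ℕ → ℕ) (t s : ℕ) :
    Fent α (2*t) (2*s) = if s = t then (α (2*t) : ℝ) - 1 else 0 := by
  unfold Fent
  rcases eq_or_ne s t with h | h
  · subst h
    rw [if_pos rfl, if_pos rfl, if_pos (by rw [Nat.odd_iff]; omega)]
  · rw [if_neg (by omega : ¬ 2*t = 2*s), if_neg, if_neg h]
    rintro (⟨he, _⟩ | ⟨he, _⟩) <;> rw [Nat.even_iff] at he <;> omega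

lemma Fent_eo (α : ℕ → ℕ) (t s : ℕ) :
    Fent α (2*t) (2*s+1) = if t ≤ s then (α (2*s+1) : ℝ) else 0 := by
  unfold Fent
  rw [if_neg (by omega : ¬ 2*t = 2*s+1)]
  rcases Nat.lt_or_ge s t with h | h
  · rw [if_neg, if_neg (by omega)]
    rintro (⟨he, _⟩ | ⟨_, hl⟩)
    · rw [Nat.even_iff] at he; omega
    · omega
  · rw [if_pos (Or.inr ⟨by rw [Nat.even_iff]; omega, by omega⟩), if_pos (by omega)]

lemma Fent_oe (α : ℕ → ℕ) (t s : ℕ) :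
    Fent α (2*t+1) (2*s) = if s ≤ t then (α (2*s) : ℝ) else 0 := by
  unfold Fent
  rw [if_neg (by omega : ¬ 2*t+1 = 2*s)]
  rcases Nat.lt_or_ge t s with h | h
  · rw [if_neg, if_neg (by omega)]
    rintro (⟨_, hl⟩ | ⟨he, _⟩)
    · omega
    · rw [Nat.even_iff] at he; omega
  · rw [if_pos (Or.inl ⟨by rw [Nat.even_iff]; omega, by omega⟩), if_pos (by omega)]

lemma Fent_oo (α : ℕ → ℕ) (t s : ℕ) :
    Fent α (2*t+1) (2*s+1) = if s = t then 0 else (α (2*s+1) : ℝ) := by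
  unfold Fent
  rcases eq_or_ne s t with h | h
  · subst h
    rw [if_pos rfl, if_pos rfl, if_neg (by rw [Nat.odd_iff]; omega)]
  · rw [if_neg (by omega : ¬ 2*t+1 = 2*s+1), if_neg h, if_pos]
    rcases Nat.lt_or_ge s t with h4 | h4
    · exact Or.inl ⟨by rw [Nat.even_iff]; omega, by omega⟩
    · exact Or.inr ⟨by rw [Nat.even_iff]; omega, by omega⟩

lemma sum_range_double (k : ℕ) (f : ℕ → ℝ) :
    ∑ j ∈ Finset.range (2*k), f j = ∑ s ∈ Finset.range k, (f (2*s) + f (2*s+1)) := by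
  induction k with
  | zero => simp
  | succ n ih =>
    have h2 : 2*(n+1) = (2*n)+1+1 := by ring
    rw [Finset.sum_range_succ, ← ih, h2, Finset.sum_range_succ, Finset.sum_range_succ]
    ring_nf

/-- The forward positivity argument: if the kernel equations hold and some `x t` is
positive (with `u t = x t`), we get a contradiction. -/
lemma pos_aux (k : ℕ) (a x u : ℕ → ℝ)
    (ha : ∀ s, s < k → 1 ≤ a s)
    (hR1 : ∀ t, t < k →
      (a t - 1) * x t + (∑ s ∈ Finset.range k, if t ≤ s then u s else 0) = 0)
    (hD1 : ∀ t, t + 1 < k → u (t+1) = u t + a (t+1) * x (t+1))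
    (hD2 : ∀ t, t + 1 < k → (a (t+1) - 1) * x (t+1) = (a t - 1) * x t + u t)
    (t : ℕ) (ht : t < k) (hx : 0 < x t) (hu : u t = x t) : False := by
  have key : ∀ s, t ≤ s → s < k → 0 ≤ x s ∧ 0 < u s := by
    intro s hts
    induction s, hts using Nat.le_induction with
    | base => exact fun _ => ⟨le_of_lt hx, hu ▸ hx⟩
    | succ s hts ih =>
      intro hsk
      have hs : s < k := by omega
      obtain ⟨hxs, hus⟩ := ih hs
      have has := ha s hs
      have has1 := ha (s+1) hsk
      have h1 : 0 < (a (s+1) - 1) * x (s+1) := by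
        rw [hD2 s hsk]; nlinarith
      have hx1 : 0 < x (s+1) := by nlinarith
      refine ⟨le_of_lt hx1, ?_⟩
      rw [hD1 s hsk]; nlinarith
  have hU : 0 < ∑ s ∈ Finset.range k, (if t ≤ s then u s else 0) := by
    apply Finset.sum_pos'
    · intro s hs
      rw [Finset.mem_range] at hs
      split
      · exact le_of_lt (key s ‹_› hs).2
      · exact le_refl 0
    · exact ⟨t, Finset.mem_range.mpr ht, by simp [(key t le_rfl ht).2]⟩
  have h := hR1 t ht
  have hat := ha t ht
  nlinarith

lemma zero_aux (k : ℕ) (a x u : ℕ → ℝ)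
    (ha : ∀ s, s < k → 1 ≤ a s)
    (hR1 : ∀ t, t < k →
      (a t - 1) * x t + (∑ s ∈ Finset.range k, if t ≤ s then u s else 0) = 0)
    (hD1 : ∀ t, t + 1 < k → u (t+1) = u t + a (t+1) * x (t+1))
    (hD2 : ∀ t, t + 1 < k → (a (t+1) - 1) * x (t+1) = (a t - 1) * x t + u t)
    (t : ℕ) (ht : t < k) (hu : u t = x t) : x t = 0 := by
  rcases lt_trichotomy (x t) 0 with hc | hc | hc
  · exfalso
    refine pos_aux k a (fun s => -x s) (fun s => -u s) ha ?_ ?_ ?_ t ht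
      (show 0 < -x t by linarith) (show -u t = -x t by rw [hu])
    · intro t' ht'
      have h := hR1 t' ht'
      have hn : (∑ s ∈ Finset.range k, if t' ≤ s then -u s else 0)
          = -(∑ s ∈ Finset.range k, if t' ≤ s then u s else 0) := by
        rw [← Finset.sum_neg_distrib]
        exact Finset.sum_congr rfl fun s _ => by split_ifs <;> ring
      show (a t' - 1) * -x t' + (∑ s ∈ Finset.range k, if t' ≤ s then -u s else 0) = 0
      rw [hn]
      linarith
    · intro t' ht'
      show -u (t'+1) = -u t' + a (t'+1) * -x (t'+1)
      have := hD1 t' ht'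
      linarith
    · intro t' ht'
      show (a (t'+1) - 1) * -x (t'+1) = (a t' - 1) * -x t' + -u t'
      have := hD2 t' ht'
      linarith
  · exact hc
  · exact (pos_aux k a x u ha hR1 hD1 hD2 t ht hc hu).elim
/-- `0` is never a root of the characteristic polynomial of `Q_π(G)`;
equivalently, `Q_π(G)` is nonsingular. -/
theorem stmt7 (k : ℕ) (hk : 1 ≤ k) (α : ℕ → ℕ) (hα : ∀ i < 2 * k, 0 < α i) :
    ¬ (quotientMatrix α k).charpoly.IsRoot 0 ∧ (quotientMatrix α k).det ≠ 0 := by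
  have hdet : (quotientMatrix α k).det ≠ 0 := by
    intro hdet
    obtain ⟨v, hv0, hv⟩ := (Matrix.exists_mulVec_eq_zero_iff).mpr hdet
    set W : ℕ → ℝ := fun j => if h : j < 2*k then v ⟨j, h⟩ else 0 with hWdef
    have hWv : ∀ j : Fin (2*k), W j.val = v j := by
      intro j
      simp [hWdef, j.isLt]
    have row : ∀ i : Fin (2*k), ∑ j ∈ Finset.range (2*k), Fent α i.val j * W j = 0 := by
      intro i
      have h := congrFun hv i
      simp only [Matrix.mulVec, dotProduct, Pi.zero_apply] at h
      rw [← h, ← Fin.sum_univ_eq_sum_range (fun j => Fent α i.val j * W j) (2*k)]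
      apply Finset.sum_congr rfl
      intro j _
      rw [Fent_entry, hWv]
    -- the even-indexed (paper: odd) row equations
    have rowE : ∀ t, t < k →
        ((α (2*t) : ℝ) - 1) * W (2*t)
          + (∑ s ∈ Finset.range k, if t ≤ s then (α (2*s+1):ℝ) * W (2*s+1) else 0) = 0 := by
      intro t ht
      have h := row ⟨2*t, by omega⟩
      rw [sum_range_double] at h
      have e : ∀ s ∈ Finset.range k,
          (Fent α (2*t) (2*s) * W (2*s) + Fent α (2*t) (2*s+1) * W (2*s+1))
            = ((if s = t then ((α (2*t):ℝ) - 1) * W (2*t) else 0)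
              + (if t ≤ s then (α (2*s+1):ℝ) * W (2*s+1) else 0)) := by
        intro s _
        rw [Fent_ee, Fent_eo, ite_mul, ite_mul, zero_mul, zero_mul]
        rcases eq_or_ne s t with h1 | h1
        · subst h1; rfl
        · rw [if_neg h1, if_neg h1]
      rw [Finset.sum_congr rfl e, Finset.sum_add_distrib,
        Finset.sum_ite_eq' (Finset.range k) t (fun _ => ((α (2*t):ℝ) - 1) * W (2*t)),
        if_pos (Finset.mem_range.mpr ht)] at h
      exact h
    -- the odd-indexed (paper: even) row equations
    have rowO : ∀ t, t < k →
        (∑ s ∈ Finset.range k, if s ≤ t then (α (2*s):ℝ) * W (2*s) else 0)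
          + (∑ s ∈ Finset.range k, if s = t then 0 else (α (2*s+1):ℝ) * W (2*s+1)) = 0 := by
      intro t ht
      have h := row ⟨2*t+1, by omega⟩
      rw [sum_range_double] at h
      have e : ∀ s ∈ Finset.range k,
          (Fent α (2*t+1) (2*s) * W (2*s) + Fent α (2*t+1) (2*s+1) * W (2*s+1))
            = ((if s ≤ t then (α (2*s):ℝ) * W (2*s) else 0)
              + (if s = t then 0 else (α (2*s+1):ℝ) * W (2*s+1))) := by
        intro s _
        rw [Fent_oe, Fent_oo, ite_mul, ite_mul, zero_mul, zero_mul]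
      rw [Finset.sum_congr rfl e, Finset.sum_add_distrib] at h
      exact h
    have ha1 : ∀ s, s < k → (1:ℝ) ≤ (α (2*s) : ℝ) := by
      intro s hs
      exact_mod_cast Nat.one_le_cast.mpr (hα (2*s) (by omega))
    -- the "B-sum" rewrite
    have hBsum : ∀ r, r < k →
        (∑ s ∈ Finset.range k, if s = r then 0 else (α (2*s+1):ℝ) * W (2*s+1))
          = (∑ s ∈ Finset.range k, (α (2*s+1):ℝ) * W (2*s+1))
            - (α (2*r+1):ℝ) * W (2*r+1) := by
      intro r hr
      have e : ∀ s ∈ Finset.range k,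
          (if s = r then 0 else (α (2*s+1):ℝ) * W (2*s+1))
            = (α (2*s+1):ℝ) * W (2*s+1)
              - (if s = r then (α (2*s+1):ℝ) * W (2*s+1) else 0) := by
        intro s _
        split_ifs <;> ring
      rw [Finset.sum_congr rfl e, Finset.sum_sub_distrib,
        Finset.sum_ite_eq' (Finset.range k) r (fun s => (α (2*s+1):ℝ) * W (2*s+1)),
        if_pos (Finset.mem_range.mpr hr)]
    -- the "A-sum" step
    have hAstep : ∀ t, t + 1 < k →
        (∑ s ∈ Finset.range k, if s ≤ t + 1 then (α (2*s):ℝ) * W (2*s) else 0)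
          = (∑ s ∈ Finset.range k, if s ≤ t then (α (2*s):ℝ) * W (2*s) else 0)
            + (α (2*(t+1)):ℝ) * W (2*(t+1)) := by
      intro t ht
      have e : ∀ s ∈ Finset.range k,
          (if s ≤ t + 1 then (α (2*s):ℝ) * W (2*s) else 0)
            = (if s ≤ t then (α (2*s):ℝ) * W (2*s) else 0)
              + (if s = t + 1 then (α (2*s):ℝ) * W (2*s) else 0) := by
        intro s _
        split_ifs <;> first | (exfalso; omega) | ring
      rw [Finset.sum_congr rfl e, Finset.sum_add_distrib,
        Finset.sum_ite_eq' (Finset.range k) (t+1) (fun s => (α (2*s):ℝ) * W (2*s)),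
        if_pos (Finset.mem_range.mpr ht)]
    -- the "U-sum" step
    have hUstep : ∀ t, t < k →
        (∑ s ∈ Finset.range k, if t ≤ s then (α (2*s+1):ℝ) * W (2*s+1) else 0)
          = (α (2*t+1):ℝ) * W (2*t+1)
            + (∑ s ∈ Finset.range k, if t + 1 ≤ s then (α (2*s+1):ℝ) * W (2*s+1) else 0) := by
      intro t ht
      have e : ∀ s ∈ Finset.range k,
          (if t ≤ s then (α (2*s+1):ℝ) * W (2*s+1) else 0)
            = (if s = t then (α (2*s+1):ℝ) * W (2*s+1) else 0)
              + (if t + 1 ≤ s then (α (2*s+1):ℝ) * W (2*s+1) else 0) := by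
        intro s _
        split_ifs <;> first | (exfalso; omega) | ring
      rw [Finset.sum_congr rfl e, Finset.sum_add_distrib,
        Finset.sum_ite_eq' (Finset.range k) t (fun s => (α (2*s+1):ℝ) * W (2*s+1)),
        if_pos (Finset.mem_range.mpr ht)]
    -- recurrence D1
    have hD1 : ∀ t, t + 1 < k →
        (α (2*(t+1)+1):ℝ) * W (2*(t+1)+1)
          = (α (2*t+1):ℝ) * W (2*t+1) + (α (2*(t+1)):ℝ) * W (2*(t+1)) := by
      intro t ht
      have h1 := rowO t (by omega)
      have h2 := rowO (t+1) ht
      rw [hBsum t (by omega)] at h1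
      rw [hBsum (t+1) ht, hAstep t ht] at h2
      linarith
    -- recurrence D2
    have hD2 : ∀ t, t + 1 < k →
        ((α (2*(t+1)):ℝ) - 1) * W (2*(t+1))
          = ((α (2*t):ℝ) - 1) * W (2*t) + (α (2*t+1):ℝ) * W (2*t+1) := by
      intro t ht
      have h1 := rowE t (by omega)
      have h2 := rowE (t+1) ht
      rw [hUstep t (by omega)] at h1
      linarith
    -- main induction
    have main : ∀ t, t ≤ k → ∀ s, s < t → W (2*s) = 0 ∧ W (2*s+1) = 0 := by
      intro t
      induction t with
      | zero => exact fun _ s hs => absurd hs (Nat.not_lt_zero s)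
      | succ t ih =>
        intro ht s hs
        have htk : t < k := by omega
        have prev := ih (by omega)
        have hA : (∑ s ∈ Finset.range k, if s ≤ t then (α (2*s):ℝ) * W (2*s) else 0)
            = (α (2*t):ℝ) * W (2*t) := by
          have e : ∀ s ∈ Finset.range k, (if s ≤ t then (α (2*s):ℝ) * W (2*s) else 0)
              = (if s = t then (α (2*s):ℝ) * W (2*s) else 0) := by
            intro s _
            rcases Nat.lt_trichotomy s t with h1 | h1 | h1
            · rw [if_pos (le_of_lt h1), if_neg (by omega), (prev s h1).1, mul_zero]
            · subst h1; rw [if_pos le_rfl, if_pos rfl]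
            · rw [if_neg (by omega), if_neg (by omega)]
          rw [Finset.sum_congr rfl e,
            Finset.sum_ite_eq' (Finset.range k) t (fun s => (α (2*s):ℝ) * W (2*s)),
            if_pos (Finset.mem_range.mpr htk)]
        have hUB : (∑ s ∈ Finset.range k, (α (2*s+1):ℝ) * W (2*s+1))
            = (∑ s ∈ Finset.range k, if t ≤ s then (α (2*s+1):ℝ) * W (2*s+1) else 0) := by
          apply Finset.sum_congr rfl
          intro s _
          rcases Nat.lt_or_ge s t with h1 | h1
          · rw [if_neg (by omega), (prev s h1).2, mul_zero]
          · rw [if_pos h1]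
        have h1 := rowE t htk
        have h2 := rowO t htk
        rw [hA, hBsum t htk, hUB] at h2
        have hut : (α (2*t+1):ℝ) * W (2*t+1) = W (2*t) := by linarith
        have hx0 : W (2*t) = 0 := by
          exact zero_aux k (fun s => (α (2*s):ℝ)) (fun s => W (2*s))
            (fun s => (α (2*s+1):ℝ) * W (2*s+1)) ha1 rowE hD1 hD2 t htk hut
        have hy0 : W (2*t+1) = 0 := by
          have hb : (0:ℝ) < (α (2*t+1) : ℝ) := by
            exact_mod_cast hα (2*t+1) (by omega)
          have : (α (2*t+1):ℝ) * W (2*t+1) = 0 := by rw [hut, hx0]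
          rcases mul_eq_zero.mp this with h | h
          · exact absurd h (ne_of_gt hb)
          · exact h
        rcases Nat.lt_succ_iff_lt_or_eq.mp hs with h | h
        · exact prev s h
        · subst h; exact ⟨hx0, hy0⟩
    apply hv0
    funext j
    show v j = 0
    have hj := j.isLt
    have hs2 : j.val / 2 < k := by omega
    obtain ⟨hW2, hW2'⟩ := main k le_rfl (j.val / 2) hs2
    have hjv : v j = W j.val := (hWv j).symm
    have hcase : j.val = 2 * (j.val / 2) ∨ j.val = 2 * (j.val / 2) + 1 := by omega
    rcases hcase with h | h
    · rw [hjv, h, hW2]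
    · rw [hjv, h, hW2']
  refine ⟨?_, hdet⟩
  intro hroot
  apply hdet
  rw [Matrix.det_eq_sign_charpoly_coeff, Polynomial.coeff_zero_eq_eval_zero, hroot, mul_zero]
end

section
/- Let G = C(α_1,…,α_{2k}) be a C-graph. Then the quotient matrix Q_π(G) has exactly k negative eigenvalues, no zero eigenvalue, and exactly k positive eigenvalues (counted with multiplicity); that is, the inertia of Q_π(G) is (k, 0, k). -/
open Matrix BigOperators
open scoped Classical

/-! The matrix `Q_π(G)` factors as `T · diag(α)` with `T` symmetric, so it has the characteristic
polynomial of the symmetric matrix `S = D T D`, `D = diag(√α)`, whose quadratic form at `D⁻¹ y`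
is that of `T` at `y`. On vectors with `y (2t) = c t` and `y (2t+1) = l * c t` (0-based indices)
the quadratic form of `T` is `∑ t, (1 - 1/α (2t) + l - l²) (c t)² + (l + l²) (∑ t, c t)²`:
negative definite for `l = -1` and positive definite for `l = 1/2`. So `S`, of size `k + k`, is
negative definite on one `k`-dimensional subspace and positive definite on another; by the
spectral theorem it then has exactly `k` negative, `k` positive and no zero eigenvalues. -/

open Finset

theorem le_card_neg_of_sum_mul_sq_neg {m n : Type*} [Fintype m] [Fintype n]
    (μ : n → ℝ) (b : n → m → ℝ) {p : ℕ} (J : (Fin p → ℝ) →ₗ[ℝ] (m → ℝ))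
    (hJ : ∀ c ≠ 0, ∑ i, μ i * (b i ⬝ᵥ J c) ^ 2 < 0) :
    p ≤ #{i | μ i < 0} := by
  by_contra! hlt
  let B : Matrix ({i | μ i < 0} : Finset n) m ℝ := Matrix.of fun i => b i
  obtain ⟨c, hc, hc0⟩ := Submodule.exists_mem_ne_zero_of_ne_bot
    ((B.mulVecLin ∘ₗ J).ker_ne_bot_of_finrank_lt (by simpa [Fintype.card_subtype] using hlt))
  have hperp : ∀ i, μ i < 0 → b i ⬝ᵥ J c = 0 := fun i hi =>
    congrFun (LinearMap.mem_ker.mp hc) ⟨i, by simpa using hi⟩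
  refine (hJ c hc0).not_ge (sum_nonneg fun i _ => ?_)
  rcases lt_or_ge (μ i) 0 with hi | hi
  · simp [hperp i hi]
  · positivity

theorem sum_sq_pos_of_ne_zero {ι : Type*} [Fintype ι] {c : ι → ℝ} (hc : c ≠ 0) :
    0 < ∑ t, c t ^ 2 :=
  have ⟨t, ht⟩ := Function.ne_iff.mp hc
  sum_pos' (fun _ _ => sq_nonneg _) ⟨t, mem_univ t, sq_pos_of_ne_zero ht⟩

theorem dotProduct_mulVec_transpose_mul_mul {n : Type*} [Fintype n] [DecidableEq n]
    {P P' : Matrix n n ℝ} (h : P * P' = 1) (B : Matrix n n ℝ) (y : n → ℝ) :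
    (P' *ᵥ y) ⬝ᵥ (Pᵀ * B * P) *ᵥ (P' *ᵥ y) = y ⬝ᵥ B *ᵥ y := by
  rw [← mulVec_mulVec, ← mulVec_mulVec, mulVec_mulVec y P P', h, one_mulVec, dotProduct_mulVec,
    vecMul_transpose, mulVec_mulVec y P P', h, one_mulVec]

theorem diagonal_eq_diagonal_sqrt_mul_transpose {n : Type*} [Fintype n] [DecidableEq n]
    {w : n → ℝ} (hw : ∀ i, 0 ≤ w i) :
    diagonal w = diagonal (fun i => √(w i)) * (diagonal fun i => √(w i))ᵀ := by
  rw [diagonal_transpose, diagonal_mul_diagonal]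
  exact congrArg diagonal (funext fun i => (Real.mul_self_sqrt (hw i)).symm)

namespace Matrix.IsHermitian

variable {n : Type*} [Fintype n] [DecidableEq n] {A : Matrix n n ℝ}

theorem dotProduct_mulVec_eq_sum_eigenvalues (hA : A.IsHermitian) (x : n → ℝ) :
    x ⬝ᵥ A *ᵥ x = ∑ i, hA.eigenvalues i * (⇑(hA.eigenvectorBasis i) ⬝ᵥ x) ^ 2 := by
  set U : Matrix n n ℝ := (hA.eigenvectorUnitary : Matrix n n ℝ)
  have hA' : A = U * diagonal hA.eigenvalues * Uᵀ := by
    simpa [star_eq_conjTranspose, conjTranspose_eq_transpose_of_trivial] using hA.spectral_theorem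
  have hw : Uᵀ *ᵥ x = fun i => ⇑(hA.eigenvectorBasis i) ⬝ᵥ x := by
    ext i; simp [U, mulVec, dotProduct]
  rw [show A *ᵥ x = _ from congrArg (· *ᵥ x) hA', ← mulVec_mulVec, ← mulVec_mulVec,
    dotProduct_mulVec, ← mulVec_transpose, hw]
  simp only [dotProduct, mulVec_diagonal, sq]
  exact sum_congr rfl fun i _ => by ring

theorem le_card_eigenvalues_neg (hA : A.IsHermitian) {p : ℕ}
    (J : (Fin p → ℝ) →ₗ[ℝ] (n → ℝ)) (hJ : ∀ c ≠ 0, J c ⬝ᵥ A *ᵥ J c < 0) :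
    p ≤ #{i | hA.eigenvalues i < 0} :=
  le_card_neg_of_sum_mul_sq_neg _ (fun i => ⇑(hA.eigenvectorBasis i)) J
    fun c hc => hA.dotProduct_mulVec_eq_sum_eigenvalues (J c) ▸ hJ c hc

theorem le_card_eigenvalues_pos (hA : A.IsHermitian) {q : ℕ}
    (J : (Fin q → ℝ) →ₗ[ℝ] (n → ℝ)) (hJ : ∀ c ≠ 0, 0 < J c ⬝ᵥ A *ᵥ J c) :
    q ≤ #{i | 0 < hA.eigenvalues i} := by
  simpa using le_card_neg_of_sum_mul_sq_neg (-hA.eigenvalues)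
    (fun i => ⇑(hA.eigenvectorBasis i)) J fun c hc => by
      simpa [neg_mul, sum_neg_distrib, ← hA.dotProduct_mulVec_eq_sum_eigenvalues] using hJ c hc

theorem card_filter_roots_charpoly (hA : A.IsHermitian) (P : ℝ → Prop) [DecidablePred P] :
    (A.charpoly.roots.filter P).card = #{i | P (hA.eigenvalues i)} := by
  rw [hA.roots_charpoly_eq_eigenvalues, RCLike.ofReal_real_eq_id, Function.id_comp,
    Multiset.filter_map, Multiset.card_map, ← filter_val, card_val]
  rfl

theorem charpoly_inertia_of_definite (hA : A.IsHermitian) {p q : ℕ}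
    (hn : Fintype.card n = p + q)
    (Jneg : (Fin p → ℝ) →ₗ[ℝ] (n → ℝ)) (hneg : ∀ c ≠ 0, Jneg c ⬝ᵥ A *ᵥ Jneg c < 0)
    (Jpos : (Fin q → ℝ) →ₗ[ℝ] (n → ℝ)) (hpos : ∀ c ≠ 0, 0 < Jpos c ⬝ᵥ A *ᵥ Jpos c) :
    (A.charpoly.roots.filter (· < 0)).card = p ∧ A.charpoly.rootMultiplicity 0 = 0 ∧
      (A.charpoly.roots.filter (0 < ·)).card = q := by
  have hp := hA.le_card_eigenvalues_neg Jneg hneg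
  have hq := hA.le_card_eigenvalues_pos Jpos hpos
  have hsplit : #{i | hA.eigenvalues i ≠ 0} =
      #{i | hA.eigenvalues i < 0} + #{i | 0 < hA.eigenvalues i} := by
    rw [← card_union_of_disjoint (disjoint_filter.mpr fun i _ h => h.not_gt), ← filter_or]
    simp only [ne_iff_lt_or_gt]
  have hle : #{i | hA.eigenvalues i ≠ 0} ≤ p + q := hn ▸ card_filter_le _ _
  have hnz : ∀ i, hA.eigenvalues i ≠ 0 := fun i =>
    (card_filter_eq_iff (s := univ) (p := fun i => hA.eigenvalues i ≠ 0)).mp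
      (by rw [card_univ, hn]; omega) i (mem_univ i)
  refine ⟨?_, ?_, ?_⟩
  · rw [hA.card_filter_roots_charpoly]
    omega
  · rw [← Polynomial.count_roots, Multiset.count_eq_card_filter_eq, hA.card_filter_roots_charpoly,
      card_eq_zero, filter_eq_empty_iff]
    exact fun i _ => (hnz i).symm
  · rw [hA.card_filter_roots_charpoly]
    omega

end Matrix.IsHermitian

noncomputable def symmQuotientMatrix (α : ℕ → ℕ) (k : ℕ) : Matrix (Fin (2 * k)) (Fin (2 * k)) ℝ :=
  Matrix.of fun i j =>
    if i = j then (if Odd (i.val + 1) then 1 - (α i.val : ℝ)⁻¹ else 0)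
    else if (Even (i.val + 1) ∧ j.val < i.val) ∨ (Even (j.val + 1) ∧ i.val < j.val) then 1 else 0

theorem symmQuotientMatrix_isHermitian (α : ℕ → ℕ) (k : ℕ) :
    (symmQuotientMatrix α k).IsHermitian := by
  ext i j
  by_cases h : i = j
  · subst h; rfl
  · simp [symmQuotientMatrix, h, Ne.symm h, or_comm]

theorem quotientMatrix_eq_symmQuotientMatrix_mul {α : ℕ → ℕ} {k : ℕ}
    (hα : ∀ i < 2 * k, 0 < α i) :
    quotientMatrix α k = symmQuotientMatrix α k * diagonal fun i => (α i.val : ℝ) := by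
  ext i j
  have hj : (α j : ℝ) ≠ 0 := by exact_mod_cast (hα j j.isLt).ne'
  rw [mul_diagonal]
  simp only [quotientMatrix, symmQuotientMatrix, of_apply]
  split_ifs <;> subst_vars <;> simp [sub_mul, inv_mul_cancel₀ hj]

def finProdFinTwoEquiv (k : ℕ) : Fin k × Fin 2 ≃ Fin (2 * k) :=
  finProdFinEquiv.trans (finCongr (Nat.mul_comm k 2))

@[simp]
theorem finProdFinTwoEquiv_val {k : ℕ} (x : Fin k × Fin 2) :
    (finProdFinTwoEquiv k x).val = x.2 + 2 * x.1 := rfl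

@[simp]
theorem finProdFinTwoEquiv_lt_iff {k : ℕ} (x y : Fin k × Fin 2) :
    finProdFinTwoEquiv k x < finProdFinTwoEquiv k y ↔ (x.2 : ℕ) + 2 * x.1 < y.2 + 2 * y.1 :=
  Iff.rfl

-- The mixed blocks contribute `l * ([u ≤ t] + [t ≤ u]) = l * (1 + [u = t])`.
theorem sum_symmQuotientMatrix_block (α : ℕ → ℕ) {k : ℕ} (l : ℝ) (u t : Fin k) :
    ∑ b, ∑ b', ![1, l] b * symmQuotientMatrix α k (finProdFinTwoEquiv k (u, b))
        (finProdFinTwoEquiv k (t, b')) * ![1, l] b' =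
      (if u = t then 1 - (α (2 * u) : ℝ)⁻¹ + l - l ^ 2 else 0) + (l + l ^ 2) := by
  simp only [symmQuotientMatrix, Fin.ext_iff, Nat.odd_iff, Nat.even_iff, Fin.val_fin_lt, of_apply,
    finProdFinTwoEquiv_val, finProdFinTwoEquiv_lt_iff, mul_ite, mul_one, mul_zero, ite_mul,
    zero_mul, Fin.sum_univ_two, Fin.isValue, Fin.coe_ofNat_eq_mod, Nat.zero_mod, zero_add,
    cons_val_zero, Nat.mul_add_mod_self_left, Nat.mod_succ, one_ne_zero, false_and, or_false,
    cons_val_one, cons_val_fin_one, mul_eq_mul_left_iff, OfNat.ofNat_ne_zero, ↓reduceIte, one_mul,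
    Order.lt_two_iff, zero_le, mul_lt_mul_iff_right₀, false_or, Nat.add_left_cancel_iff,
    add_lt_add_iff_left]
  split_ifs <;> first | (exfalso; omega) | ring

noncomputable def interleaveScaled (k : ℕ) (l : ℝ) : (Fin k → ℝ) →ₗ[ℝ] (Fin (2 * k) → ℝ) :=
  LinearMap.pi fun i =>
    ![1, l] ((finProdFinTwoEquiv k).symm i).2 • LinearMap.proj ((finProdFinTwoEquiv k).symm i).1

@[simp]
theorem interleaveScaled_apply {k : ℕ} (l : ℝ) (c : Fin k → ℝ) (x : Fin k × Fin 2) :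
    interleaveScaled k l c (finProdFinTwoEquiv k x) = ![1, l] x.2 * c x.1 := by
  simp [interleaveScaled]

theorem interleaveScaled_dotProduct_symmQuotientMatrix (α : ℕ → ℕ) {k : ℕ} (l : ℝ)
    (c : Fin k → ℝ) :
    interleaveScaled k l c ⬝ᵥ symmQuotientMatrix α k *ᵥ interleaveScaled k l c =
      ∑ t : Fin k, (1 - (α (2 * t) : ℝ)⁻¹ + l - l ^ 2) * c t ^ 2 +
        (l + l ^ 2) * (∑ t, c t) ^ 2 := by
  calc interleaveScaled k l c ⬝ᵥ symmQuotientMatrix α k *ᵥ interleaveScaled k l c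
      = ∑ u, ∑ t, c u * c t * ∑ b, ∑ b', ![1, l] b *
          symmQuotientMatrix α k (finProdFinTwoEquiv k (u, b)) (finProdFinTwoEquiv k (t, b')) *
            ![1, l] b' := by
        simp only [dotProduct, mulVec, mul_sum, ← (finProdFinTwoEquiv k).sum_comp,
          Fintype.sum_prod_type, interleaveScaled_apply]
        refine sum_congr rfl fun u _ => ?_
        rw [sum_comm]
        exact sum_congr rfl fun t _ => sum_congr rfl fun b _ => sum_congr rfl fun b' _ => by ring
    _ = ∑ u, ∑ t, c u * c t *
          ((if u = t then 1 - (α (2 * u) : ℝ)⁻¹ + l - l ^ 2 else 0) + (l + l ^ 2)) := by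
        simp only [sum_symmQuotientMatrix_block]
    _ = _ := by
        rw [sq (∑ t, c t), sum_mul_sum, mul_sum]
        simp only [mul_add, sum_add_distrib, mul_ite, mul_zero, sum_ite_eq, mem_univ, if_true,
          mul_sum]
        congr 1
        · exact sum_congr rfl fun u _ => by ring
        · rw [← sum_add_distrib]
          refine sum_congr rfl fun u _ => ?_
          rw [← sum_add_distrib]
          exact sum_congr rfl fun t _ => by ring

theorem interleaveScaled_neg_one_dotProduct_neg (α : ℕ → ℕ) {k : ℕ} {c : Fin k → ℝ}
    (hc : c ≠ 0) :
    interleaveScaled k (-1) c ⬝ᵥ symmQuotientMatrix α k *ᵥ interleaveScaled k (-1) c < 0 := by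
  rw [interleaveScaled_dotProduct_symmQuotientMatrix]
  calc ∑ t : Fin k, (1 - (α (2 * t) : ℝ)⁻¹ + -1 - (-1) ^ 2) * c t ^ 2
        + (-1 + (-1) ^ 2) * (∑ t, c t) ^ 2
      ≤ ∑ t, -c t ^ 2 := by
        norm_num only [add_zero, zero_mul]
        exact sum_le_sum fun t _ => by
          nlinarith [sq_nonneg (c t), inv_nonneg.mpr (Nat.cast_nonneg (α := ℝ) (α (2 * t)))]
    _ < 0 := by
        rw [sum_neg_distrib]
        exact neg_neg_of_pos (sum_sq_pos_of_ne_zero hc)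

theorem interleaveScaled_half_dotProduct_pos (α : ℕ → ℕ) {k : ℕ} {c : Fin k → ℝ} (hc : c ≠ 0) :
    0 < interleaveScaled k (1 / 2) c ⬝ᵥ symmQuotientMatrix α k *ᵥ interleaveScaled k (1 / 2) c := by
  rw [interleaveScaled_dotProduct_symmQuotientMatrix]
  have hdiag : ∑ t, c t ^ 2 / 4 ≤
      ∑ t : Fin k, (1 - (α (2 * t) : ℝ)⁻¹ + 1 / 2 - (1 / 2) ^ 2) * c t ^ 2 :=
    sum_le_sum fun t _ => by
      nlinarith [sq_nonneg (c t), Nat.cast_inv_le_one (α := ℝ) (α (2 * t))]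
  have hpos : 0 < ∑ t, c t ^ 2 / 4 := by
    rw [← sum_div]
    exact div_pos (sum_sq_pos_of_ne_zero hc) four_pos
  nlinarith [sq_nonneg (∑ t, c t)]

theorem stmt8_general (k : ℕ) (α : ℕ → ℕ) (hα : ∀ i < 2 * k, 0 < α i) :
    (((quotientMatrix α k).charpoly.roots.filter fun x => x < 0).card = k) ∧
      ((quotientMatrix α k).charpoly.rootMultiplicity 0 = 0) ∧
      (((quotientMatrix α k).charpoly.roots.filter fun x => 0 < x).card = k) := by
  set D : Matrix (Fin (2 * k)) (Fin (2 * k)) ℝ := diagonal fun i => √(α i : ℝ)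
  set D' : Matrix (Fin (2 * k)) (Fin (2 * k)) ℝ := diagonal fun i => (√(α i : ℝ))⁻¹
  have hDD' : D * D' = 1 := by
    rw [diagonal_mul_diagonal, ← diagonal_one]
    exact congrArg diagonal <| funext fun i =>
      mul_inv_cancel₀ (Real.sqrt_ne_zero'.mpr (by exact_mod_cast hα i i.isLt))
  have hS : (Dᵀ * symmQuotientMatrix α k * D).IsHermitian := by
    simpa [conjTranspose_eq_transpose_of_trivial] using
      isHermitian_conjTranspose_mul_mul D (symmQuotientMatrix_isHermitian α k)
  rw [quotientMatrix_eq_symmQuotientMatrix_mul hα,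
    diagonal_eq_diagonal_sqrt_mul_transpose fun i => Nat.cast_nonneg _, ← mul_assoc,
    charpoly_mul_comm, ← mul_assoc]
  refine hS.charpoly_inertia_of_definite (by simp [two_mul])
    (D'.mulVecLin ∘ₗ interleaveScaled k (-1)) (fun c hc => ?_)
    (D'.mulVecLin ∘ₗ interleaveScaled k (1 / 2)) (fun c hc => ?_)
  all_goals rw [LinearMap.comp_apply, mulVecLin_apply, dotProduct_mulVec_transpose_mul_mul hDD']
  · exact interleaveScaled_neg_one_dotProduct_neg α hc
  · exact interleaveScaled_half_dotProduct_pos α hc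

/-- the inertia of `Q_π(G)` is `(k, 0, k)`: it has exactly `k` negative, no zero
and exactly `k` positive eigenvalues, counted as root multiplicities of the characteristic
polynomial. -/
theorem stmt8 (k : ℕ) (hk : 1 ≤ k) (α : ℕ → ℕ) (hα : ∀ i < 2 * k, 0 < α i) :
    (((quotientMatrix α k).charpoly.roots.filter fun x => x < 0).card = k) ∧
      ((quotientMatrix α k).charpoly.rootMultiplicity 0 = 0) ∧
      (((quotientMatrix α k).charpoly.roots.filter fun x => 0 < x).card = k) :=
  stmt8_general k α hα
end

section
/- Let G = C(α_1,…,α_{2k}) be a C-graph with adjacency matrix A, and let m(G) denote the number of distinct real eigenvalues of A. Then m(G) ≤ 2k + 2. -/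
/-!
Vertices in the same cell `C_j` of a C-graph are twins: the cell is a clique or an independent
set, and its vertices have the same neighbours outside it. So within a cell the rows of `A + I`
(clique) or of `A` (independent set) agree, hence the rows of `A² + A = (A + I) A = A (A + I)`
are constant on cells and `rank (A² + A)` is at most the number `2k` of cells. An eigenvector
for an eigenvalue `μ ∉ {0, -1}` is scaled by `μ² + μ ≠ 0` under `A² + A`, so it lies in its
range; eigenvectors for distinct eigenvalues are independent, so at most `rank (A² + A)`
eigenvalues lie outside `{0, -1}`.
-/

open Matrix BigOperators
open scoped Classical

open Polynomial

section Eigenvalues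

variable {K V : Type*} [Field K] [AddCommGroup V] [Module K V] [FiniteDimensional K V]

lemma Module.End.card_roots_charpoly_le_finrank_range_aeval_add (f : Module.End K V) {q : K[X]}
    (hq : q ≠ 0) :
    f.charpoly.roots.toFinset.card ≤
      Module.finrank K (LinearMap.range (aeval f q)) + q.roots.toFinset.card := by
  set T := f.charpoly.roots.toFinset.filter (fun μ => q.eval μ ≠ 0)
  have hsub : f.charpoly.roots.toFinset ⊆ T ∪ q.roots.toFinset := by
    intro μ hμ
    by_cases h : q.eval μ = 0
    · simp [Polynomial.mem_roots hq, h]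
    · simp [T, hμ, h]
  have hT : T.card ≤ Module.finrank K (LinearMap.range (aeval f q)) := by
    have hvec : ∀ μ : T, ∃ v, f.HasEigenvector μ v := fun μ => by
      have hμ := (Finset.mem_filter.mp μ.2).1
      rw [Multiset.mem_toFinset, mem_roots f.charpoly_monic.ne_zero,
        ← Module.End.hasEigenvalue_iff_isRoot_charpoly] at hμ
      exact hμ.exists_hasEigenvector
    choose v hv using hvec
    have hrange : ∀ μ : T, v μ ∈ LinearMap.range (aeval f q) := fun μ => by
      refine ⟨(q.eval (μ : K))⁻¹ • v μ, ?_⟩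
      rw [map_smul, Module.End.aeval_apply_of_hasEigenvector (hv μ), smul_smul,
        inv_mul_cancel₀ (Finset.mem_filter.mp μ.2).2, one_smul]
    have hli : LinearIndependent K
        (fun μ : T => (⟨v μ, hrange μ⟩ : LinearMap.range (aeval f q))) :=
      LinearIndependent.of_comp (Submodule.subtype _)
        (Module.End.eigenvectors_linearIndependent' f _ Subtype.coe_injective v hv)
    simpa using hli.fintype_card_le_finrank
  calc f.charpoly.roots.toFinset.card ≤ (T ∪ q.roots.toFinset).card := Finset.card_le_card hsub
    _ ≤ _ := Finset.card_union_le _ _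
    _ ≤ _ := by gcongr

end Eigenvalues

lemma Matrix.card_roots_charpoly_le_rank_aeval_add {K n : Type*} [Field K] [Fintype n]
    [DecidableEq n] (A : Matrix n n K) {q : K[X]} (hq : q ≠ 0) :
    A.charpoly.roots.toFinset.card ≤ (aeval A q).rank + q.roots.toFinset.card := by
  have hlin : aeval (Matrix.toLin' A) q = Matrix.toLin' (aeval A q) :=
    aeval_algHom_apply (Matrix.toLinAlgEquiv' : Matrix n n K ≃ₐ[K] _) A q
  have := Module.End.card_roots_charpoly_le_finrank_range_aeval_add (Matrix.toLin' A) hq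
  rwa [Matrix.charpoly_toLin', hlin, Matrix.toLin'_apply'] at this

lemma Matrix.rank_le_card_of_row_eq {K m n ι : Type*} [Field K] [Fintype n] [Fintype ι]
    (B : Matrix m n K) (f : m → ι) (h : ∀ u v, f u = f v → B u = B v) :
    B.rank ≤ Fintype.card ι := by
  have hle : LinearMap.range B.mulVecLin ≤ LinearMap.range (LinearMap.funLeft K K f) := by
    rintro _ ⟨x, rfl⟩
    refine ⟨Function.extend f (B *ᵥ x) 0, funext fun u => ?_⟩
    exact Function.FactorsThrough.extend_apply
      (fun u v huv => by simp only [Matrix.mulVec, h u v huv]) (0 : ι → K) u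
  calc B.rank ≤ Module.finrank K (LinearMap.range (LinearMap.funLeft K K f)) :=
        Submodule.finrank_mono hle
    _ ≤ Module.finrank K (ι → K) := LinearMap.finrank_range_le _
    _ = Fintype.card ι := Module.finrank_fintype_fun_eq_card K

lemma Matrix.row_mul_self_add_self_eq {R n : Type*} [Ring R] [Fintype n] [DecidableEq n]
    (A : Matrix n n R) {u v : n} (h : A u = A v ∨ (A + 1) u = (A + 1) v) :
    (A * A + A) u = (A * A + A) v := by
  rcases h with h | h
  · rw [← mul_add_one]
    ext w
    simp only [Matrix.mul_apply, h]
  · rw [← add_one_mul]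
    ext w
    simp only [Matrix.mul_apply, h]

section AdjMat

variable {V : Type*} [Fintype V] {G : SimpleGraph V} {u v : V}

lemma adjMat_row_eq (h : ∀ w, G.Adj u w ↔ G.Adj v w) : adjMat G u = adjMat G v :=
  funext fun w => by simp [adjMat, h w]

lemma adjMat_add_one_row_eq [DecidableEq V]
    (h : ∀ w, (u = w ∨ G.Adj u w) ↔ (v = w ∨ G.Adj v w)) :
    (adjMat G + 1) u = (adjMat G + 1) v := by
  have entry : ∀ x w, (adjMat G + 1) x w = if x = w ∨ G.Adj x w then 1 else 0 := by
    intro x w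
    by_cases hxw : x = w
    · simp [adjMat, hxw]
    · simp [adjMat, hxw, Matrix.one_apply_ne hxw]
  funext w
  rw [entry, entry, if_congr (h w) rfl rfl]

end AdjMat

lemma cographC_succ_adj (α : ℕ → ℕ) (m : ℕ) (s t) :
    (cographC α (m + 1)).Adj ((splitLast α m).symm s) ((splitLast α m).symm t) ↔
      s ≠ t ∧ ¬(cographC α m ⊕g (⊤ : SimpleGraph (Fin (α m)))).Adj s t := by
  simp [cographC]

lemma cographC_adj (α : ℕ → ℕ) (m : ℕ) (x y : Σ j : Fin m, Fin (α j)) :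
    (cographC α m).Adj x y ↔ x ≠ y ∧ (x.1 = y.1 ↔ Even (m - max x.1.val y.1.val)) := by
  induction m with
  | zero => exact x.1.elim0
  | succ m ih =>
    obtain ⟨s, rfl⟩ := (splitLast α m).symm.surjective x
    obtain ⟨t, rfl⟩ := (splitLast α m).symm.surjective y
    rw [cographC_succ_adj, (splitLast α m).symm.injective.ne_iff]
    rcases s with ⟨⟨i, hi⟩, a⟩ | a <;> rcases t with ⟨⟨j, hj⟩, b⟩ | b <;>
      simp only [splitLast, Equiv.coe_fn_symm_mk, ne_eq, Sum.inl.injEq, Sum.inr.injEq,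
        SimpleGraph.sum_adj, SimpleGraph.top_adj, ih, Fin.mk.injEq]
    · rw [show m + 1 - max i j = m - max i j + 1 by omega, Nat.even_add_one]
      tauto
    · simp [show m + 1 - max i m = 1 by omega, hi.ne]
    · simp [show m + 1 - max m j = 1 by omega, hj.ne']
    · simp

lemma cographC_twins_of_fst_eq (α : ℕ → ℕ) (m : ℕ) {x y : Σ j : Fin m, Fin (α j)}
    (h : x.1 = y.1) :
    (∀ w, (cographC α m).Adj x w ↔ (cographC α m).Adj y w) ∨
      ∀ w, (x = w ∨ (cographC α m).Adj x w) ↔ (y = w ∨ (cographC α m).Adj y w) := by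
  have hout : ∀ w : Σ j : Fin m, Fin (α j), w.1 ≠ x.1 →
      x ≠ w ∧ y ≠ w ∧ ((cographC α m).Adj x w ↔ (cographC α m).Adj y w) := by
    intro w hw
    have hxw : x ≠ w := fun e => hw (congrArg Sigma.fst e).symm
    have hyw : y ≠ w := fun e => hw (h ▸ (congrArg Sigma.fst e).symm)
    exact ⟨hxw, hyw, by simp [cographC_adj, hxw, hyw, h]⟩
  by_cases hc : Even (m - x.1.val)
  · refine Or.inr fun w => ?_
    by_cases hw : w.1 = x.1
    · simp only [cographC_adj, ne_eq, hw, ← h, max_self, hc, and_true, em]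
    · obtain ⟨hxw, hyw, hadj⟩ := hout w hw
      simp [hxw, hyw, hadj]
  · refine Or.inl fun w => ?_
    by_cases hw : w.1 = x.1
    · simp [cographC_adj, hw, ← h, hc]
    · exact (hout w hw).2.2

lemma rank_adjMat_cographC_mul_add_le (α : ℕ → ℕ) (m : ℕ) :
    (adjMat (cographC α m) * adjMat (cographC α m) + adjMat (cographC α m)).rank ≤ m := by
  simpa using Matrix.rank_le_card_of_row_eq _ Sigma.fst fun _ _ h =>
    Matrix.row_mul_self_add_self_eq _
      ((cographC_twins_of_fst_eq α m h).imp adjMat_row_eq adjMat_add_one_row_eq)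

theorem card_roots_charpoly_adjMat_cographC_le (α : ℕ → ℕ) (m : ℕ) :
    (adjMat (cographC α m)).charpoly.roots.toFinset.card ≤ m + 2 := by
  set q : ℝ[X] := X ^ 2 + X
  have hq : q ≠ 0 := fun h => by simpa [q] using congrArg (eval 1) h
  have hrank : (aeval (adjMat (cographC α m)) q).rank ≤ m := by
    simpa [q, sq] using rank_adjMat_cographC_mul_add_le α m
  have hroots : q.roots.toFinset.card ≤ 2 :=
    (Multiset.toFinset_card_le _).trans ((card_roots' _).trans (by simp only [q]; compute_degree!))
  calc _ ≤ (aeval (adjMat (cographC α m)) q).rank + q.roots.toFinset.card :=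
        Matrix.card_roots_charpoly_le_rank_aeval_add _ hq
    _ ≤ m + 2 := add_le_add hrank hroots

theorem stmt10_general (k : ℕ) (α : ℕ → ℕ) :
    (adjMat (cographC α (2 * k))).charpoly.roots.toFinset.card ≤ 2 * k + 2 :=
  card_roots_charpoly_adjMat_cographC_le α (2 * k)

/-- the number of distinct real eigenvalues of a C-graph `C(α_1,…,α_{2k})`
is at most `2k + 2`. -/
theorem stmt10 (k : ℕ) (hk : 1 ≤ k) (α : ℕ → ℕ) (hα : ∀ i < 2 * k, 0 < α i) :
    (adjMat (cographC α (2 * k))).charpoly.roots.toFinset.card ≤ 2 * k + 2 :=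
  stmt10_general k α
end

section
/- Let G = C(α_1,…,α_{2k}) be a C-graph with adjacency matrix A, and let α_min = min{α_1,…,α_{2k}}. Then the closed interval [(−1−√2)/2, ((−1+√2)/2)·α_min] contains no eigenvalue of A other than possibly 0 and −1 (the trivial eigenvalues). -/
open Matrix BigOperators
open scoped Classical

set_option maxHeartbeats 1600000

section Aux

open Polynomial

lemma eig_of_charpoly_root {n : Type*} [Fintype n] [DecidableEq n]
    {M : Matrix n n ℝ} {lam : ℝ} (h : M.charpoly.IsRoot lam) :
    ∃ v : n → ℝ, v ≠ 0 ∧ M *ᵥ v = lam • v := by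
  have h0 : ((Matrix.diagonal (fun _ : n => lam)) - M).det = 0 := by
    have h1 : eval lam M.charmatrix.det = 0 := h.eq_zero
    have h2 : eval lam M.charmatrix.det = (M.charmatrix.map (evalRingHom lam)).det := by
      have := RingHom.map_det (evalRingHom lam) M.charmatrix
      simpa using this
    rw [h2] at h1
    rw [show ((Matrix.charmatrix M).map (evalRingHom lam)) =
        (Matrix.diagonal (fun _ : n => lam)) - M by
      ext i j
      by_cases hij : i = j <;>
        simp [hij, Matrix.charmatrix_apply, Matrix.diagonal_apply, Matrix.map_apply]] at h1
    exact h1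
  obtain ⟨v, hv, hv2⟩ := (Matrix.exists_mulVec_eq_zero_iff).mpr h0
  refine ⟨v, hv, ?_⟩
  rw [Matrix.sub_mulVec] at hv2
  have h3 : Matrix.diagonal (fun _ : n => lam) *ᵥ v = lam • v := by
    ext i; simp [Matrix.mulVec_diagonal]
  have h4 := sub_eq_zero.mp hv2
  rw [h3] at h4; exact h4.symm

lemma signFlip {c x : ℝ} (hc : c < 0) (h : 0 < c * x) : x < 0 := by
  by_contra hcon; push_neg at hcon
  nlinarith [mul_nonpos_of_nonpos_of_nonneg (le_of_lt hc) hcon]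

lemma signFlip' {c x : ℝ} (hc : c < 0) (h : c * x < 0) : 0 < x := by
  by_contra hcon; push_neg at hcon
  nlinarith [mul_nonneg (neg_nonneg.mpr (le_of_lt hc)) (neg_nonneg.mpr hcon)]

lemma signPos {c x : ℝ} (hc : 0 < c) (h : c * x < 0) : x < 0 := by
  by_contra hcon; push_neg at hcon
  nlinarith [mul_nonneg (le_of_lt hc) hcon]

lemma signPos' {c x : ℝ} (hc : 0 < c) (h : 0 < c * x) : 0 < x := by
  by_contra hcon; push_neg at hcon
  nlinarith [mul_nonpos_of_nonneg_of_nonpos (le_of_lt hc) hcon]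

lemma signNN {c x : ℝ} (hc : 0 < c) (h : 0 ≤ c * x) : 0 ≤ x := by
  by_contra hcon; push_neg at hcon
  nlinarith [mul_neg_of_pos_of_neg hc hcon]

end Aux


lemma cograph_adj_s15 (α : ℕ → ℕ) : ∀ (m : ℕ) (u v : Σ j : Fin m, Fin (α j.val)),
    (cographC α m).Adj u v ↔ u ≠ v ∧
      ((u.1.val = v.1.val ∧ (m - u.1.val) % 2 = 0) ∨
       (u.1.val ≠ v.1.val ∧ (m - max u.1.val v.1.val) % 2 = 1)) := by
  intro m
  induction m with
  | zero => intro u _; exact u.1.elim0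
  | succ m ih =>
    rintro ⟨⟨i, hi⟩, z⟩ ⟨⟨j, hj⟩, w⟩
    rw [cographC]
    rw [SimpleGraph.comap_adj, SimpleGraph.compl_adj]
    have hne : (splitLast α m) ⟨⟨i, hi⟩, z⟩ ≠ (splitLast α m) ⟨⟨j, hj⟩, w⟩ ↔
        (⟨⟨i, hi⟩, z⟩ : Σ j : Fin (m+1), Fin (α j.val)) ≠ ⟨⟨j, hj⟩, w⟩ :=
      (Equiv.injective _).ne_iff
    rw [hne]
    by_cases hij : (⟨⟨i, hi⟩, z⟩ : Σ j : Fin (m+1), Fin (α j.val)) = ⟨⟨j, hj⟩, w⟩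
    · simp [hij]
    · simp only [hij, not_false_iff, true_and, ne_eq]
      by_cases hi' : i < m <;> by_cases hj' : j < m
      · -- both old
        simp only [splitLast, Equiv.coe_fn_mk, dif_pos hi', dif_pos hj']
        rw [show ((cographC α m ⊕g (⊤ : SimpleGraph (Fin (α m)))).Adj
            (Sum.inl ⟨⟨i, hi'⟩, z⟩) (Sum.inl ⟨⟨j, hj'⟩, w⟩)) ↔
            (cographC α m).Adj ⟨⟨i, hi'⟩, z⟩ ⟨⟨j, hj'⟩, w⟩ from Iff.rfl]
        rw [ih]
        have huv : ((⟨⟨i, hi'⟩, z⟩ : Σ j : Fin m, Fin (α j.val)) = ⟨⟨j, hj'⟩, w⟩) ↔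
            ((⟨⟨i, hi⟩, z⟩ : Σ j : Fin (m+1), Fin (α j.val)) = ⟨⟨j, hj⟩, w⟩) := by
          constructor
          · rintro h
            obtain ⟨h1, h2⟩ := Sigma.mk.inj_iff.mp h
            have : i = j := congrArg Fin.val h1
            subst this
            simp_all
          · rintro h
            obtain ⟨h1, h2⟩ := Sigma.mk.inj_iff.mp h
            have : i = j := congrArg Fin.val h1
            subst this
            simp_all
        simp only [ne_eq, huv, hij, not_false_iff, true_and]
        by_cases he : i = j <;> simp only [he] <;> push_neg <;> constructor <;>
          intro h <;> simp_all <;> omega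
      · -- i < m, j = m
        simp only [splitLast, Equiv.coe_fn_mk, dif_pos hi', dif_neg hj']
        simp only [SimpleGraph.sum_adj]
        simp only [not_false_iff, true_iff]
        omega
      · -- i = m, j < m
        simp only [splitLast, Equiv.coe_fn_mk, dif_neg hi', dif_pos hj']
        simp only [SimpleGraph.sum_adj]
        simp only [not_false_iff, true_iff]
        omega
      · -- i = m, j = m
        obtain rfl : i = m := by omega
        obtain rfl : j = i := by omega
        simp only [splitLast, Equiv.coe_fn_mk, dif_neg hi', dif_neg hj']
        simp only [SimpleGraph.sum_adj, SimpleGraph.top_adj]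
        apply iff_of_false
        · intro hc
          apply hc
          intro hcast
          apply hij
          have hzw : z = w := Fin.ext (congrArg Fin.val hcast)
          subst hzw
          rfl
        · rintro (⟨-, h⟩ | ⟨h, -⟩) <;> simp at h


lemma rowSum (k : ℕ) (α : ℕ → ℕ) (x : (Σ j : Fin (2*k), Fin (α j.val)) → ℝ)
    (Y : ℕ → ℝ) (hY : ∀ (j : Fin (2*k)), Y j.val = ∑ w : Fin (α j.val), x ⟨j, w⟩)
    (i : ℕ) (hi : i < 2*k) (z : Fin (α i)) :
    (adjMat (cographC α (2*k)) *ᵥ x) ⟨⟨i, hi⟩, z⟩ =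
      (if i % 2 = 0 then Y i - x ⟨⟨i, hi⟩, z⟩ else 0) +
      ∑ j ∈ (Finset.range (2*k)).filter (fun j => j ≠ i ∧ (max i j) % 2 = 1), Y j := by
  have hmv : (adjMat (cographC α (2*k)) *ᵥ x) ⟨⟨i, hi⟩, z⟩ =
      ∑ v : (Σ j : Fin (2*k), Fin (α j.val)),
        (if (cographC α (2*k)).Adj ⟨⟨i, hi⟩, z⟩ v then x v else 0) := by
    simp [Matrix.mulVec, dotProduct, adjMat, ite_mul, one_mul, zero_mul]
  rw [hmv, ← Finset.univ_sigma_univ, Finset.sum_sigma]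
  have hinner : ∀ j : Fin (2*k),
      (∑ w : Fin (α j.val), (if (cographC α (2*k)).Adj ⟨⟨i, hi⟩, z⟩ ⟨j, w⟩ then x ⟨j, w⟩ else 0)) =
      (if (j:ℕ) ≠ i ∧ (max i (j:ℕ)) % 2 = 1 then Y (j:ℕ) else 0) +
      (if (j:ℕ) = i ∧ i % 2 = 0 then Y i - x ⟨⟨i, hi⟩, z⟩ else 0) := by
    intro j
    by_cases hji : (j:ℕ) = i
    · have hj' : j = ⟨i, hi⟩ := Fin.ext hji
      subst hj'
      have hadj : ∀ w : Fin (α i), (cographC α (2*k)).Adj ⟨⟨i, hi⟩, z⟩ ⟨⟨i, hi⟩, w⟩ ↔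
          (¬ w = z ∧ i % 2 = 0) := by
        intro w
        rw [cograph_adj_s15]
        constructor
        · rintro ⟨hne, (⟨-, hpar⟩ | ⟨hii, -⟩)⟩
          · have hpar' : (2*k - i) % 2 = 0 := hpar
            refine ⟨fun hw => hne ?_, by omega⟩
            subst hw; rfl
          · exact absurd rfl hii
        · rintro ⟨hwz, hpar⟩
          refine ⟨fun hp => hwz ?_, Or.inl ⟨rfl, show (2*k - i) % 2 = 0 by omega⟩⟩
          have := (Sigma.mk.inj_iff.mp hp).2
          exact (eq_of_heq this).symm
      simp only [hadj]
      by_cases hpar : i % 2 = 0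
      · simp only [hpar, and_true]
        have hrw : ∀ w : Fin (α i), (if ¬ w = z then x ⟨⟨i, hi⟩, w⟩ else 0) =
            x ⟨⟨i, hi⟩, w⟩ - (if w = z then x ⟨⟨i, hi⟩, w⟩ else 0) := by
          intro w; by_cases hw : w = z <;> simp [hw]
        rw [Finset.sum_congr rfl (fun w _ => hrw w), Finset.sum_sub_distrib,
          Finset.sum_ite_eq' Finset.univ z (fun w => x ⟨⟨i, hi⟩, w⟩)]
        simp [hY ⟨i, hi⟩, hji]
      · simp [hpar, hji]
    · have hadj : ∀ w : Fin (α j.val), (cographC α (2*k)).Adj ⟨⟨i, hi⟩, z⟩ ⟨j, w⟩ ↔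
          ((max i (j:ℕ)) % 2 = 1) := by
        intro w
        rw [cograph_adj_s15]
        constructor
        · rintro ⟨-, (⟨heq, -⟩ | ⟨-, hpar⟩)⟩
          · exact absurd heq.symm hji
          · have hpar' : (2*k - max i (j:ℕ)) % 2 = 1 := hpar
            have := j.isLt; omega
        · intro hpar
          refine ⟨fun hp => ?_, Or.inr ⟨fun h => hji h.symm,
              show (2*k - max i (j:ℕ)) % 2 = 1 by have := j.isLt; omega⟩⟩
          exact hji ((congrArg (fun q => q.1.val) hp)).symm
      simp only [hadj]
      by_cases hpar : (max i (j:ℕ)) % 2 = 1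
      · have hco : ∀ w : Fin (α (j:ℕ)), (if (max i (j:ℕ)) % 2 = 1 then x ⟨j, w⟩ else 0) =
            x ⟨j, w⟩ := fun w => if_pos hpar
        rw [Finset.sum_congr rfl (fun w _ => hco w), ← hY j]
        simp [hpar, hji]
      · simp [hpar, hji]
  rw [Finset.sum_congr rfl (fun j _ => hinner j), Finset.sum_add_distrib]
  rw [Fin.sum_univ_eq_sum_range (fun jv => if jv ≠ i ∧ (max i jv) % 2 = 1 then Y jv else 0)]
  rw [Fin.sum_univ_eq_sum_range (fun jv => if jv = i ∧ i % 2 = 0 then Y i - x ⟨⟨i, hi⟩, z⟩ else 0)]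
  rw [← Finset.sum_filter]
  rw [Finset.sum_eq_single_of_mem i (Finset.mem_range.mpr hi)
    (fun b _ hb => by simp [hb])]
  simp only [true_and, if_pos rfl]
  by_cases hpar : i % 2 = 0 <;> simp [hpar, add_comm]


lemma cellEq (k : ℕ) (α : ℕ → ℕ) (lam : ℝ) (x : (Σ j : Fin (2*k), Fin (α j.val)) → ℝ)
    (heig : adjMat (cographC α (2*k)) *ᵥ x = lam • x)
    (Y : ℕ → ℝ) (hY : ∀ (j : Fin (2*k)), Y j.val = ∑ w : Fin (α j.val), x ⟨j, w⟩)
    (i : ℕ) (hi : i < 2*k) :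
    lam * Y i = (if i % 2 = 0 then ((α i : ℝ) - 1) * Y i else 0) +
      (α i : ℝ) * ∑ j ∈ (Finset.range (2*k)).filter
        (fun j => j ≠ i ∧ (max i j) % 2 = 1), Y j := by
  have h1 : lam * Y i = ∑ z : Fin (α i), (adjMat (cographC α (2*k)) *ᵥ x) ⟨⟨i, hi⟩, z⟩ := by
    rw [heig]
    have := hY ⟨i, hi⟩
    simp only [Pi.smul_apply, smul_eq_mul]
    rw [show Y i = Y (⟨i, hi⟩ : Fin (2*k)).val from rfl, this, Finset.mul_sum]
  rw [h1, Finset.sum_congr rfl (fun z _ => rowSum k α x Y hY i hi z), Finset.sum_add_distrib]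
  congr 1
  · by_cases hpar : i % 2 = 0
    · simp only [hpar, if_true]
      rw [Finset.sum_sub_distrib, Finset.sum_const, Finset.card_univ, Fintype.card_fin]
      have := hY ⟨i, hi⟩
      rw [show Y i = Y (⟨i, hi⟩ : Fin (2*k)).val from rfl, this]
      push_cast
      ring
    · simp [hpar]
  · rw [Finset.sum_const, Finset.card_univ, Fintype.card_fin]
    simp [nsmul_eq_mul]


lemma filter_even (k t : ℕ) (ht : t < k) (Y : ℕ → ℝ) :
    ∑ j ∈ (Finset.range (2*k)).filter (fun j => j ≠ 2*t ∧ (max (2*t) j) % 2 = 1), Y j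
    = ∑ s ∈ Finset.Ico t k, Y (2*s+1) := by
  have hset : (Finset.range (2*k)).filter (fun j => j ≠ 2*t ∧ (max (2*t) j) % 2 = 1)
      = (Finset.Ico t k).image (fun s => 2*s+1) := by
    ext j
    simp only [Finset.mem_filter, Finset.mem_range, Finset.mem_image, Finset.mem_Ico]
    constructor
    · rintro ⟨h1, h2, h3⟩
      exact ⟨j/2, by omega, by omega⟩
    · rintro ⟨s, hs, rfl⟩
      exact ⟨by omega, by omega, by omega⟩
  rw [hset, Finset.sum_image (fun a _ b _ h => by omega)]

lemma filter_odd (k t : ℕ) (ht : t < k) (Y : ℕ → ℝ) :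
    ∑ j ∈ (Finset.range (2*k)).filter (fun j => j ≠ 2*t+1 ∧ (max (2*t+1) j) % 2 = 1), Y j
    = (∑ j ∈ Finset.range (2*t+1), Y j) + ∑ s ∈ Finset.Ico (t+1) k, Y (2*s+1) := by
  have hset : (Finset.range (2*k)).filter (fun j => j ≠ 2*t+1 ∧ (max (2*t+1) j) % 2 = 1)
      = Finset.range (2*t+1) ∪ (Finset.Ico (t+1) k).image (fun s => 2*s+1) := by
    ext j
    simp only [Finset.mem_filter, Finset.mem_range, Finset.mem_union, Finset.mem_image,
      Finset.mem_Ico]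
    constructor
    · rintro ⟨h1, h2, h3⟩
      by_cases hj : j < 2*t+1
      · exact Or.inl hj
      · exact Or.inr ⟨j/2, by omega, by omega⟩
    · rintro (h | ⟨s, hs, rfl⟩)
      · exact ⟨by omega, by omega, by omega⟩
      · exact ⟨by omega, by omega, by omega⟩
  have hdis : Disjoint (Finset.range (2*t+1)) ((Finset.Ico (t+1) k).image (fun s => 2*s+1)) := by
    rw [Finset.disjoint_left]
    rintro j hj1 hj2
    rw [Finset.mem_range] at hj1
    rw [Finset.mem_image] at hj2
    obtain ⟨s, hs, rfl⟩ := hj2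
    rw [Finset.mem_Ico] at hs
    omega
  rw [hset, Finset.sum_union hdis, Finset.sum_image (fun a _ b _ h => by omega)]

lemma chain (k : ℕ) (hk : 1 ≤ k) (P : ℝ → ℝ → Prop) (aa bb W R u v : ℕ → ℝ) (lam : ℝ)
    (hWstep : ∀ t, t < k → W (t+1) = W t - v t)
    (hRstep : ∀ t, t < k → R (t+1) = R t + u t)
    (hstep : ∀ t, t < k → ∀ (WW RR uu vv : ℝ), (lam + 1 - aa t) * uu = aa t * WW →
      (lam + bb t) * vv = bb t * (RR + uu) → 0 < WW → (RR = WW ∨ P WW RR) →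
      (P (WW - vv) (RR + uu) ∧ 0 < WW - vv) ∨ (P (-(WW - vv)) (-(RR + uu)) ∧ 0 < -(WW - vv)))
    (hueq : ∀ t, t < k → (lam + 1 - aa t) * u t = aa t * W t)
    (hveq : ∀ t, t < k → (lam + bb t) * v t = bb t * (R t + u t))
    (hR0 : R 0 = W 0) (hW0 : W 0 ≠ 0) : W k ≠ 0 := by
  have main : ∀ t, t ≤ k → 1 ≤ t →
      (P (W t) (R t) ∧ 0 < W t) ∨ (P (-(W t)) (-(R t)) ∧ 0 < -(W t)) := by
    intro t
    induction t with
    | zero => omega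
    | succ t iht =>
      intro htk h1
      have htk' : t < k := by omega
      have hsrc : (0 < W t ∧ (R t = W t ∨ P (W t) (R t))) ∨
          (0 < -(W t) ∧ (-(R t) = -(W t) ∨ P (-(W t)) (-(R t)))) := by
        by_cases ht0 : t = 0
        · subst ht0
          rcases hW0.lt_or_gt with hlt | hgt
          · exact Or.inr ⟨by linarith, Or.inl (by rw [hR0])⟩
          · exact Or.inl ⟨hgt, Or.inl hR0⟩
        · rcases iht (by omega) (by omega) with ⟨hP, hWp⟩ | ⟨hP, hWp⟩
          · exact Or.inl ⟨hWp, Or.inr hP⟩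
          · exact Or.inr ⟨hWp, Or.inr hP⟩
      have e1 : W t - v t = W (t+1) := by rw [hWstep t htk']
      have e2 : R t + u t = R (t+1) := by rw [hRstep t htk']
      rcases hsrc with ⟨hWp, hOr⟩ | ⟨hWp, hOr⟩
      · have hcon := hstep t htk' (W t) (R t) (u t) (v t) (hueq t htk') (hveq t htk') hWp hOr
        rw [e1, e2] at hcon
        exact hcon
      · have hu' : (lam + 1 - aa t) * (-(u t)) = aa t * (-(W t)) := by
          linear_combination -(hueq t htk')
        have hv' : (lam + bb t) * (-(v t)) = bb t * (-(R t) + -(u t)) := by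
          linear_combination -(hveq t htk')
        have hcon := hstep t htk' (-(W t)) (-(R t)) (-(u t)) (-(v t)) hu' hv' hWp hOr
        have e3 : -(W t) - -(v t) = -(W (t+1)) := by rw [← e1]; ring
        have e4 : -(R t) + -(u t) = -(R (t+1)) := by rw [← e2]; ring
        rw [e3, e4] at hcon
        rcases hcon with h | h
        · exact Or.inr h
        · rw [neg_neg, neg_neg] at h
          exact Or.inl h
  have hfin := main k le_rfl hk
  rcases hfin with ⟨-, h⟩ | ⟨-, h⟩ <;> intro hzero <;> rw [hzero] at h <;> simp at h


lemma stepMid {lam a b W R u v : ℝ} (ha : 1 ≤ a) (hb : 1 ≤ b)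
    (hm : -1 < lam) (h0 : lam < 0)
    (hu : (lam + 1 - a) * u = a * W) (hv : (lam + b) * v = b * (R + u))
    (hW : 0 < W) (hR : R = W ∨ R < 0) :
    0 < W - v ∧ R + u < 0 := by
  have hc : lam + 1 - a < 0 := by linarith
  have hd : 0 < lam + b := by linarith
  have h1 : (lam + 1 - a) * (R + u) = (lam + 1 - a) * R + a * W := by
    rw [mul_add, hu]
  have hcR : 0 < (lam + 1 - a) * (R + u) := by
    rcases hR with h | h
    · rw [h1, h]; nlinarith
    · rw [h1]; nlinarith [mul_pos (neg_pos.mpr hc) (neg_pos.mpr h)]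
  have hR' : R + u < 0 := signFlip hc hcR
  have hv0 : v < 0 := by
    apply signPos hd
    rw [hv]
    exact mul_neg_of_pos_of_neg (by linarith) hR'
  exact ⟨by linarith, hR'⟩


lemma stepPos {s2 lam a b W R u v : ℝ} (hs2 : s2 ^ 2 = 2) (hs2p : 0 < s2)
    (ha : a = 1 ∨ 2 ≤ a) (hb : 1 ≤ b)
    (hla : lam ≤ (s2 - 1) / 2 * a) (hlb : lam ≤ (s2 - 1) / 2 * b) (h0 : 0 < lam)
    (hu : (lam + 1 - a) * u = a * W) (hv : (lam + b) * v = b * (R + u))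
    (hW : 0 < W) (hR : R = W ∨ (R < 0 ∧ -(1 + s2) * W ≤ R)) :
    (0 < W - v ∧ R + u < 0 ∧ -(1 + s2) * (W - v) ≤ R + u) ∨
    (0 < -(W - v) ∧ -(R + u) < 0 ∧ -(1 + s2) * (-(W - v)) ≤ -(R + u)) := by
  have hs2a : 1 < s2 := by nlinarith
  have hs2b : s2 < 3 / 2 := by nlinarith
  have hd : 0 < lam + b := by linarith
  rcases ha with ha1 | ha2
  · -- a = 1
    subst ha1
    have hu' : lam * u = W := by linear_combination hu
    have hlam' : lam ≤ (s2 - 1) / 2 := by linarith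
    have hl4 : lam ≤ 1 / 4 := by linarith
    have hu0 : 0 < u := signPos' h0 (by rw [hu']; exact hW)
    have hkey : (1 - (1 + s2) * lam) * W ≤ lam * (R + u) := by
      rcases hR with h | ⟨h1, h2⟩
      · have e : lam * (R + u) = lam * W + W := by rw [h, mul_add, hu']
        nlinarith [mul_pos h0 hW]
      · have h3 : lam * (-(1 + s2) * W) ≤ lam * R :=
          mul_le_mul_of_nonneg_left h2 (le_of_lt h0)
        have e : lam * (R + u) = lam * R + W := by rw [mul_add, hu']
        nlinarith
    have hml : (1 + s2) * lam ≤ 1 / 2 := by nlinarith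
    have hR' : 0 < R + u := signPos' h0 (by nlinarith)
    have hv0 : 0 < v := signPos' hd (by rw [hv]; exact mul_pos (by linarith) hR')
    have h4 : (2 + s2) * lam ≤ s2 / 2 := by nlinarith
    have hW' : 0 < v - W := by
      have h7 : lam * (lam + b) * (v - W) = b * (lam * (R + u)) - lam * (lam + b) * W := by
        linear_combination lam * hv
      have h8 : b * ((1 - (1 + s2) * lam) * W) ≤ b * (lam * (R + u)) :=
        mul_le_mul_of_nonneg_left hkey (by linarith)
      have h10 : 0 < b * ((1 - (1 + s2) * lam) * W) - lam * (lam + b) * W := by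
        have hsq : lam ^ 2 ≤ 1 / 16 := by nlinarith
        have hc1 : (0:ℝ) ≤ 1 - (2 + s2) * lam := by linarith
        have hc2 : 1 * (1 - (2 + s2) * lam) ≤ b * (1 - (2 + s2) * lam) :=
          mul_le_mul_of_nonneg_right hb hc1
        have e2 : b * ((1 - (1 + s2) * lam) * W) - lam * (lam + b) * W =
            W * (b * (1 - (2 + s2) * lam) - lam ^ 2) := by ring
        rw [e2]
        apply mul_pos hW
        nlinarith
      exact signPos' (mul_pos h0 hd) (by linarith)
    have hthird : R + u ≤ (1 + s2) * (v - W) := by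
      have e1 : lam * (lam + b) * ((1 + s2) * (v - W) - (R + u)) =
          (lam * (R + u)) * (s2 * b - lam) - (1 + s2) * (lam * (lam + b)) * W := by
        linear_combination (1 + s2) * lam * hv
      have hsb : 0 < s2 * b - lam := by nlinarith
      have h10 : ((1 - (1 + s2) * lam) * W) * (s2 * b - lam) ≤ (lam * (R + u)) * (s2 * b - lam) :=
        mul_le_mul_of_nonneg_right hkey (le_of_lt hsb)
      have hpoly : ((1 - (1 + s2) * lam) * W) * (s2 * b - lam) - (1 + s2) * (lam * (lam + b)) * W =
          W * (s2 * b - lam - (3 + 2 * s2) * (b * lam)) := by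
        linear_combination (-(b * lam * W)) * hs2
      have h8' : 0 ≤ s2 * b - lam - (3 + 2 * s2) * (b * lam) := by
        nlinarith [mul_nonneg (show (0:ℝ) ≤ (s2 - 1) / 2 - lam by linarith)
            (show (0:ℝ) ≤ b by linarith),
          mul_nonneg (show (0:ℝ) ≤ b - 1 by linarith) (show (0:ℝ) ≤ s2 - 1 by linarith)]
      have h9 : 0 ≤ lam * (lam + b) * ((1 + s2) * (v - W) - (R + u)) := by
        rw [e1]
        nlinarith [mul_nonneg (le_of_lt hW) h8']
      have := signNN (mul_pos h0 hd) h9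
      linarith
    right
    refine ⟨by linarith, by linarith, by linarith⟩
  · -- 2 ≤ a
    have hc : lam + 1 - a < 0 := by
      nlinarith [mul_nonneg (show (0:ℝ) ≤ a - 2 by linarith) (show (0:ℝ) ≤ 3 - s2 by linarith)]
    have h1 : (lam + 1 - a) * (R + u) = (lam + 1 - a) * R + a * W := by
      rw [mul_add, hu]
    have hcR : 0 < (lam + 1 - a) * (R + u) := by
      rcases hR with h | ⟨h2, h3⟩
      · rw [h1, h]; nlinarith
      · rw [h1]; nlinarith [mul_pos (neg_pos.mpr hc) (neg_pos.mpr h2)]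
    have hR' : R + u < 0 := signFlip hc hcR
    have hv0 : v < 0 := signPos hd (by
      rw [hv]; exact mul_neg_of_pos_of_neg (by linarith) hR')
    have hthird : -(1 + s2) * (W - v) ≤ R + u := by
      have h3 : (lam + b) * ((R + u) + (1 + s2) * (W - v)) =
          (R + u) * (lam - s2 * b) + (1 + s2) * ((lam + b) * W) := by
        linear_combination (-(1 + s2)) * hv
      have hsb : lam - s2 * b < 0 := by nlinarith
      have h4 : 0 < (R + u) * (lam - s2 * b) := mul_pos_of_neg_of_neg hR' hsb
      have h5 : 0 < (lam + b) * ((R + u) + (1 + s2) * (W - v)) := by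
        rw [h3]
        nlinarith [mul_pos hd hW]
      have := signPos' hd h5
      linarith
    left
    exact ⟨by linarith, hR', hthird⟩


lemma stepNeg {s2 lam a b W R u v : ℝ} (hs2 : s2 ^ 2 = 2) (hs2p : 0 < s2)
    (ha : 1 ≤ a) (hb : b = 1 ∨ 2 ≤ b)
    (hlow : -(1 + s2) / 2 ≤ lam) (hup : lam < -1)
    (hu : (lam + 1 - a) * u = a * W) (hv : (lam + b) * v = b * (R + u))
    (hW : 0 < W) (hR : R = W ∨ 2 * (-lam) * R ≤ W) :
    (0 < W - v ∧ 2 * (-lam) * (R + u) ≤ W - v) ∨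
    (0 < -(W - v) ∧ 2 * (-lam) * (-(R + u)) ≤ -(W - v)) := by
  have hs2a : 1 < s2 := by nlinarith
  have hs2b : s2 < 3 / 2 := by nlinarith
  set μ : ℝ := -1 - lam with hμdef
  have hμ0 : 0 < μ := by simp only [hμdef]; linarith
  have hμup : μ ≤ (s2 - 1) / 2 := by simp only [hμdef]; linarith
  have hμq : 4 * μ ^ 2 + 4 * μ ≤ 1 := by
    nlinarith [mul_nonneg (sub_nonneg.mpr hμup)
      (show (0:ℝ) ≤ (s2 - 1) / 2 + μ by nlinarith)]
  have hμh : μ < 1 / 2 := by nlinarith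
  have hml : -lam = 1 + μ := by simp only [hμdef]; ring
  have hu' : (a + μ) * u = -(a * W) := by linear_combination -hu + u * hμdef
  have hau : 0 < a + μ := by linarith
  have hcoef : (0:ℝ) ≤ 1 - 2 * μ - 2 * μ ^ 2 := by nlinarith
  rcases hR with hRW | hRb
  · -- entry: R = W
    have hR1 : (a + μ) * (R + u) = μ * W := by
      rw [hRW]; linear_combination -hu + u * hμdef + W * hμdef
    have hR'pos : 0 < R + u := signPos' hau (by rw [hR1]; exact mul_pos hμ0 hW)
    rcases hb with hb1 | hb2
    · -- b = 1
      subst hb1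
      have hv' : (-μ) * v = R + u := by linear_combination hv + (-v) * hμdef
      have hv0 : v < 0 := signFlip (show -μ < 0 by linarith) (by rw [hv']; exact hR'pos)
      have hW' : 0 < W - v := by linarith
      have e : μ * (a + μ) * ((W - v) - 2 * (1 + μ) * (R + u)) =
          μ * W * (a + μ + 1 - 2 * μ * (1 + μ)) := by
        linear_combination (a + μ) * hv' + (1 - 2 * μ * (1 + μ)) * hR1
      have hfac : 0 < a + μ + 1 - 2 * μ * (1 + μ) := by nlinarith
      have h9 : 0 ≤ μ * (a + μ) * ((W - v) - 2 * (1 + μ) * (R + u)) := by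
        rw [e]; positivity
      have h10 := signNN (mul_pos hμ0 hau) h9
      refine Or.inl ⟨hW', ?_⟩
      have heq : 2 * (-lam) * (R + u) = 2 * (1 + μ) * (R + u) := by rw [hml]
      linarith
    · -- 2 ≤ b
      have hd2' : 0 < b - 1 - μ := by linarith
      have hdb : lam + b = b - 1 - μ := by simp only [hμdef]; ring
      rw [hdb] at hv
      have hv0 : 0 < v := signPos' hd2' (by rw [hv]; exact mul_pos (by linarith) hR'pos)
      have e : (a + μ) * (b - 1 - μ) * (W - v) =
          W * ((a + μ) * (b - 1 - μ) - b * μ) := by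
        linear_combination (-(a + μ)) * hv + (-b) * hR1
      have hf1 : 0 < (a + μ) * (b - 1 - μ) - b * μ := by
        nlinarith [mul_nonneg (show (0:ℝ) ≤ a - 1 by linarith)
          (show (0:ℝ) ≤ b - 1 - μ by linarith)]
      have hW' : 0 < W - v :=
        signPos' (mul_pos hau hd2') (by rw [e]; exact mul_pos hW hf1)
      have e2 : (a + μ) * (b - 1 - μ) * ((W - v) - 2 * (1 + μ) * (R + u)) =
          W * ((a + μ) * (b - 1 - μ) - b * μ - 2 * μ * (1 + μ) * (b - 1 - μ)) := by
        linear_combination (-(a + μ)) * hv + (-b - 2 * (1 + μ) * (b - 1 - μ)) * hR1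
      have hf2 : 0 ≤ (a + μ) * (b - 1 - μ) - b * μ - 2 * μ * (1 + μ) * (b - 1 - μ) := by
        nlinarith [mul_nonneg (show (0:ℝ) ≤ a - 1 by linarith)
            (show (0:ℝ) ≤ b - 1 - μ by linarith),
          mul_nonneg (show (0:ℝ) ≤ b - 2 by linarith) hcoef,
          mul_nonneg (mul_nonneg hμ0.le hμ0.le) hμ0.le]
      have h9 : 0 ≤ (a + μ) * (b - 1 - μ) * ((W - v) - 2 * (1 + μ) * (R + u)) := by
        rw [e2]; exact mul_nonneg hW.le hf2
      have h10 := signNN (mul_pos hau hd2') h9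
      refine Or.inl ⟨hW', ?_⟩
      have heq : 2 * (-lam) * (R + u) = 2 * (1 + μ) * (R + u) := by rw [hml]
      linarith
  · -- main: 2*(-lam)*R ≤ W
    have hRb' : 2 * (1 + μ) * R ≤ W := by
      have heq : 2 * (1 + μ) * R = 2 * (-lam) * R := by rw [hml]
      linarith
    have e : 2 * (1 + μ) * ((a + μ) * (R + u)) =
        (a + μ) * (2 * (1 + μ) * R) - 2 * (1 + μ) * (a * W) := by
      linear_combination 2 * (1 + μ) * hu'
    have hbound : 2 * (1 + μ) * ((a + μ) * (R + u)) ≤ W * (μ - a - 2 * a * μ) := by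
      have h1 : (a + μ) * (2 * (1 + μ) * R) ≤ (a + μ) * W :=
        mul_le_mul_of_nonneg_left hRb' hau.le
      rw [e]; nlinarith
    have hneg : W * (μ - a - 2 * a * μ) < 0 :=
      mul_neg_of_pos_of_neg hW (by nlinarith)
    have hprod : (2 * (1 + μ) * (a + μ)) * (R + u) < 0 := by nlinarith
    have hR'neg : R + u < 0 := signPos (by positivity) hprod
    rcases hb with hb1 | hb2
    · -- b = 1
      subst hb1
      have hv' : (-μ) * v = R + u := by linear_combination hv + (-v) * hμdef
      have hv0 : 0 < v := signFlip' (show -μ < 0 by linarith) (by rw [hv']; exact hR'neg)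
      have e3 : μ * (W - v) = μ * W + (R + u) := by linear_combination hv'
      have hf2 : 0 < a * (1 - 2 * μ ^ 2) - μ - 2 * μ ^ 2 - 2 * μ ^ 3 := by
        nlinarith [mul_nonneg (mul_nonneg hμ0.le hμ0.le) hμ0.le,
          mul_nonneg (show (0:ℝ) ≤ a - 1 by linarith)
            (show (0:ℝ) ≤ 1 - 2 * μ ^ 2 by nlinarith)]
      have hWv : W - v < 0 := by
        have hkey : (2 * (1 + μ) * (a + μ)) * (μ * W + (R + u)) < 0 := by
          nlinarith [mul_pos hW hf2]
        have h2 := signPos (show (0:ℝ) < 2 * (1 + μ) * (a + μ) by positivity) hkey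
        apply signPos hμ0
        rw [e3]; exact h2
      have h20 : W * (a + 2 * a * μ - μ) ≤ 2 * (1 + μ) * ((a + μ) * (-(R + u))) := by
        nlinarith
      have h21 : 0 ≤ (a + 2 * a * μ - μ) * (1 - 2 * μ - 2 * μ ^ 2) -
          2 * μ * (1 + μ) * (a + μ) := by
        have hco2 : (0:ℝ) ≤ 1 - 2 * μ - 8 * μ ^ 2 - 4 * μ ^ 3 := by
          nlinarith [mul_nonneg hμ0.le hcoef]
        nlinarith [mul_nonneg (show (0:ℝ) ≤ a - 1 by linarith) hco2,
          mul_nonneg hμ0.le hcoef]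
      have h22 : 0 ≤ (1 - 2 * μ - 2 * μ ^ 2) * (-(R + u)) - μ * W := by
        apply signNN (show (0:ℝ) < 2 * (1 + μ) * (a + μ) by positivity)
        nlinarith [mul_le_mul_of_nonneg_left h20 hcoef, mul_nonneg hW.le h21]
      have hgoal : 0 ≤ μ * (-(W - v) - 2 * (1 + μ) * (-(R + u))) := by
        have e4 : μ * (-(W - v) - 2 * (1 + μ) * (-(R + u))) =
            (1 - 2 * μ - 2 * μ ^ 2) * (-(R + u)) - μ * W := by
          linear_combination -e3
        rw [e4]; exact h22
      have hsec := signNN hμ0 hgoal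
      refine Or.inr ⟨by linarith, ?_⟩
      have heq : 2 * (-lam) * (-(R + u)) = 2 * (1 + μ) * (-(R + u)) := by rw [hml]
      linarith
    · -- 2 ≤ b
      have hd2 : 0 < lam + b := by linarith
      have hv0 : v < 0 := signPos hd2 (by
        rw [hv]; exact mul_neg_of_pos_of_neg (by linarith) hR'neg)
      refine Or.inl ⟨by linarith, ?_⟩
      have h1 : 2 * (-lam) * (R + u) ≤ 0 :=
        mul_nonpos_of_nonneg_of_nonpos (by linarith) hR'neg.le
      linarith
/-- for `G = C(α_1,…,α_{2k})`, the closed interval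
`[(-1-√2)/2, ((-1+√2)/2)·α_min]` contains no eigenvalue of `A` other than possibly the
trivial eigenvalues `0` and `-1`. -/
theorem stmt15 (k : ℕ) (hk : 1 ≤ k) (α : ℕ → ℕ) (hα : ∀ i < 2 * k, 0 < α i) (lam : ℝ)
    (hlam : (adjMat (cographC α (2 * k))).charpoly.IsRoot lam)
    (hmem : lam ∈ Set.Icc ((-1 - Real.sqrt 2) / 2)
      (((-1 + Real.sqrt 2) / 2) *
        (((Finset.range (2 * k)).inf' (Finset.nonempty_range_iff.mpr (by omega)) α : ℕ) : ℝ))) :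
    lam = 0 ∨ lam = -1 := by
  by_contra hcon
  push_neg at hcon
  obtain ⟨h0, h1⟩ := hcon
  obtain ⟨x, hx0, heig⟩ := eig_of_charpoly_root hlam
  set s2 := Real.sqrt 2 with hs2def
  have hs2 : s2 ^ 2 = 2 := Real.sq_sqrt (by norm_num)
  have hs2p : 0 < s2 := Real.sqrt_pos.mpr (by norm_num)
  have hs2a : 1 < s2 := by nlinarith
  have hs2b : s2 < 3 / 2 := by nlinarith
  obtain ⟨hlo0, hup0⟩ := hmem
  have hlo : -(1 + s2) / 2 ≤ lam := by linarith
  have hamin : ∀ i, i < 2 * k → lam ≤ (s2 - 1) / 2 * (α i : ℝ) := by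
    intro i hi
    have h3 : ((Finset.range (2 * k)).inf'
        (Finset.nonempty_range_iff.mpr (by omega)) α) ≤ α i :=
      Finset.inf'_le α (Finset.mem_range.mpr hi)
    have h4 : ((((Finset.range (2 * k)).inf'
        (Finset.nonempty_range_iff.mpr (by omega)) α : ℕ)) : ℝ) ≤ (α i : ℝ) :=
      Nat.cast_le.mpr h3
    calc lam ≤ ((-1 + s2) / 2) * (((Finset.range (2 * k)).inf'
          (Finset.nonempty_range_iff.mpr (by omega)) α : ℕ) : ℝ) := hup0
      _ ≤ ((-1 + s2) / 2) * (α i : ℝ) :=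
          mul_le_mul_of_nonneg_left h4 (by linarith)
      _ = (s2 - 1) / 2 * (α i : ℝ) := by ring
  have hint : ∀ i, i < 2 * k → ((α i : ℝ) = 1 ∨ 2 ≤ (α i : ℝ)) := by
    intro i hi
    rcases Nat.lt_or_ge (α i) 2 with h | h
    · left
      have h5 : α i = 1 := by have := hα i hi; omega
      simp [h5]
    · right; exact_mod_cast h
  have h1le : ∀ i, i < 2 * k → (1 : ℝ) ≤ (α i : ℝ) := by
    intro i hi
    have := hα i hi
    exact_mod_cast this
  set Y : ℕ → ℝ := fun i => if h : i < 2 * k then ∑ w : Fin (α i), x ⟨⟨i, h⟩, w⟩ else 0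
    with hYdef
  have hY : ∀ (j : Fin (2 * k)), Y j.val = ∑ w : Fin (α j.val), x ⟨j, w⟩ := by
    intro j
    simp only [hYdef]
    rw [dif_pos j.isLt]
  have hEq := fun (i : ℕ) (hi : i < 2 * k) => cellEq k α lam x heig Y hY i hi
  by_cases hY0 : ∀ i, i < 2 * k → Y i = 0
  · -- all cell sums vanish: x itself shows lam ∈ {0, -1}
    obtain ⟨u, hu⟩ := Function.ne_iff.mp hx0
    have hu' : x u ≠ 0 := by simpa using hu
    obtain ⟨⟨i, hi⟩, z⟩ := u
    have hrow := rowSum k α x Y hY i hi z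
    have hpt : (adjMat (cographC α (2 * k)) *ᵥ x) ⟨⟨i, hi⟩, z⟩ = lam * x ⟨⟨i, hi⟩, z⟩ := by
      rw [heig]; simp
    have hsum0 : ∑ j ∈ (Finset.range (2 * k)).filter
        (fun j => j ≠ i ∧ (max i j) % 2 = 1), Y j = 0 :=
      Finset.sum_eq_zero (fun j hj => hY0 j
        (Finset.mem_range.mp (Finset.mem_filter.mp hj).1))
    rw [hpt, hsum0, add_zero] at hrow
    by_cases hpar : i % 2 = 0
    · rw [if_pos hpar, hY0 i hi] at hrow
      have hfac : (lam + 1) * x ⟨⟨i, hi⟩, z⟩ = 0 := by linear_combination hrow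
      rcases mul_eq_zero.mp hfac with h | h
      · exact h1 (by linarith)
      · exact hu' h
    · rw [if_neg hpar] at hrow
      rcases mul_eq_zero.mp hrow with h | h
      · exact h0 h
      · exact hu' h
  · push_neg at hY0
    obtain ⟨i0, hi0, hYi0⟩ := hY0
    set Wf : ℕ → ℝ := fun t => ∑ s ∈ Finset.Ico t k, Y (2 * s + 1) with hWdef
    set Rf : ℕ → ℝ := fun t => (∑ j ∈ Finset.range (2 * t), Y j) + Wf t with hRdef
    have hWk : Wf k = 0 := by simp [hWdef]
    have hWR0 : Rf 0 = Wf 0 := by simp [hRdef]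
    have hWstep : ∀ t, t < k → Wf (t + 1) = Wf t - Y (2 * t + 1) := by
      intro t ht
      have h := Finset.sum_eq_sum_Ico_succ_bot ht (fun s => Y (2 * s + 1))
      simp only [hWdef]
      linarith [h]
    have hRstep : ∀ t, t < k → Rf (t + 1) = Rf t + Y (2 * t) := by
      intro t ht
      simp only [hRdef]
      have e : 2 * (t + 1) = (2 * t + 1) + 1 := by ring
      rw [e, Finset.sum_range_succ, Finset.sum_range_succ, hWstep t ht]
      simp only [hWdef]
      ring
    have hueq : ∀ t, t < k →
        (lam + 1 - (α (2 * t) : ℝ)) * Y (2 * t) = (α (2 * t) : ℝ) * Wf t := by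
      intro t ht
      have h := hEq (2 * t) (by omega)
      rw [if_pos (by omega : 2 * t % 2 = 0), filter_even k t ht Y] at h
      simp only [hWdef]
      linear_combination h
    have hveq : ∀ t, t < k → (lam + (α (2 * t + 1) : ℝ)) * Y (2 * t + 1) =
        (α (2 * t + 1) : ℝ) * (Rf t + Y (2 * t)) := by
      intro t ht
      have h := hEq (2 * t + 1) (by omega)
      rw [if_neg (by omega : ¬ (2 * t + 1) % 2 = 0), filter_odd k t ht Y] at h
      have hsplit := Finset.sum_eq_sum_Ico_succ_bot ht (fun s => Y (2 * s + 1))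
      have e : ∑ s ∈ Finset.Ico (t + 1) k, Y (2 * s + 1) = Wf t - Y (2 * t + 1) := by
        simp only [hWdef]
        linarith [hsplit]
      have e2 : ∑ j ∈ Finset.range (2 * t + 1), Y j =
          (∑ j ∈ Finset.range (2 * t), Y j) + Y (2 * t) := Finset.sum_range_succ Y (2 * t)
      rw [e, e2] at h
      simp only [hRdef]
      linear_combination h
    -- nonvanishing of c and d
    have hc0 : ∀ t, t < k → (lam + 1 - (α (2 * t) : ℝ)) ≠ 0 := by
      intro t ht
      have ha1' := h1le (2 * t) (by omega)
      rcases lt_trichotomy lam 0 with hn | hz | hp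
      · intro hcontra; linarith
      · exact absurd hz h0
      · rcases hint (2 * t) (by omega) with he | he
        · rw [he]; intro hcontra; apply h0; linarith
        · intro hcontra
          have hla := hamin (2 * t) (by omega)
          have : (s2 - 1) / 2 * (α (2 * t) : ℝ) ≤ 1 / 4 * (α (2 * t) : ℝ) :=
            mul_le_mul_of_nonneg_right (by linarith) (by linarith)
          linarith
    have hd0 : ∀ t, t < k → (lam + (α (2 * t + 1) : ℝ)) ≠ 0 := by
      intro t ht hcontra
      have hb1' := h1le (2 * t + 1) (by omega)
      rcases lt_trichotomy lam (-1) with hn | he | hp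
      · rcases hint (2 * t + 1) (by omega) with he2 | he2
        · rw [he2] at hcontra; linarith
        · linarith
      · exact h1 he
      · linarith
    -- if Wf 0 = 0 then everything vanishes
    have hW0ne : Wf 0 ≠ 0 := by
      intro hW0z
      have hall : ∀ t, t ≤ k → Wf t = 0 ∧ Rf t = 0 := by
        intro t
        induction t with
        | zero => exact fun _ => ⟨hW0z, by rw [hWR0, hW0z]⟩
        | succ t iht =>
          intro hle
          have htk : t < k := by omega
          obtain ⟨hw, hr⟩ := iht (by omega)
          have hY2t : Y (2 * t) = 0 := by
            have h := hueq t htk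
            rw [hw, mul_zero] at h
            exact (mul_eq_zero.mp h).resolve_left (hc0 t htk)
          have hY2t1 : Y (2 * t + 1) = 0 := by
            have h := hveq t htk
            rw [hr, hY2t, add_zero, mul_zero] at h
            exact (mul_eq_zero.mp h).resolve_left (hd0 t htk)
          exact ⟨by rw [hWstep t htk, hw, hY2t1, sub_zero],
                 by rw [hRstep t htk, hr, hY2t, add_zero]⟩
      have hYall : ∀ j, j < 2 * k → Y j = 0 := by
        intro j hj
        have htk : j / 2 < k := by omega
        have hY2t : Y (2 * (j / 2)) = 0 := by
          have h := hueq (j / 2) htk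
          rw [(hall (j / 2) (by omega)).1, mul_zero] at h
          exact (mul_eq_zero.mp h).resolve_left (hc0 _ htk)
        by_cases hparj : j % 2 = 0
        · have hjj : j = 2 * (j / 2) := by omega
          rw [hjj]; exact hY2t
        · have hjj : j = 2 * (j / 2) + 1 := by omega
          have h := hveq (j / 2) htk
          rw [(hall (j / 2) (by omega)).2, hY2t, add_zero, mul_zero] at h
          rw [hjj]
          exact (mul_eq_zero.mp h).resolve_left (hd0 _ htk)
      exact hYi0 (hYall i0 hi0)
    -- the three spectral cases
    rcases lt_trichotomy lam 0 with hneg | hz | hpos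
    · rcases lt_trichotomy lam (-1) with hlt | heq | hgt
      · -- lam < -1 : use stepNeg
        refine absurd hWk (chain k hk (fun WW RR => 2 * (-lam) * RR ≤ WW)
          (fun t => (α (2 * t) : ℝ)) (fun t => (α (2 * t + 1) : ℝ))
          Wf Rf (fun t => Y (2 * t)) (fun t => Y (2 * t + 1)) lam
          hWstep hRstep ?_ hueq hveq hWR0 hW0ne)
        intro t ht WW RR uu vv huu hvv hWW hOr
        have hbint : (α (2 * t + 1) : ℝ) = 1 ∨ 2 ≤ (α (2 * t + 1) : ℝ) :=
          hint (2 * t + 1) (by omega)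
        have haint : (1 : ℝ) ≤ (α (2 * t) : ℝ) := h1le (2 * t) (by omega)
        rcases stepNeg hs2 hs2p haint hbint hlo hlt huu hvv hWW hOr with ⟨c1, c2⟩ | ⟨c1, c2⟩
        · exact Or.inl ⟨c2, c1⟩
        · exact Or.inr ⟨c2, c1⟩
      · exact h1 heq
      · -- -1 < lam < 0 : use stepMid
        refine absurd hWk (chain k hk (fun WW RR => RR < 0)
          (fun t => (α (2 * t) : ℝ)) (fun t => (α (2 * t + 1) : ℝ))
          Wf Rf (fun t => Y (2 * t)) (fun t => Y (2 * t + 1)) lam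
          hWstep hRstep ?_ hueq hveq hWR0 hW0ne)
        intro t ht WW RR uu vv huu hvv hWW hOr
        obtain ⟨c1, c2⟩ := stepMid (h1le (2 * t) (by omega)) (h1le (2 * t + 1) (by omega))
          hgt hneg huu hvv hWW hOr
        exact Or.inl ⟨c2, c1⟩
    · exact h0 hz
    · -- 0 < lam : use stepPos
      refine absurd hWk (chain k hk (fun WW RR => RR < 0 ∧ -(1 + s2) * WW ≤ RR)
        (fun t => (α (2 * t) : ℝ)) (fun t => (α (2 * t + 1) : ℝ))
        Wf Rf (fun t => Y (2 * t)) (fun t => Y (2 * t + 1)) lam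
        hWstep hRstep ?_ hueq hveq hWR0 hW0ne)
      intro t ht WW RR uu vv huu hvv hWW hOr
      rcases stepPos hs2 hs2p (hint (2 * t) (by omega)) (h1le (2 * t + 1) (by omega))
          (hamin (2 * t) (by omega)) (hamin (2 * t + 1) (by omega)) hpos huu hvv hWW hOr
        with ⟨c1, c2, c3⟩ | ⟨c1, c2, c3⟩
      · exact Or.inl ⟨⟨c2, c3⟩, c1⟩
      · exact Or.inr ⟨⟨c2, c3⟩, c1⟩
end

section
/- Let n ≥ 1 and let β_1,…,β_n be elements of a commutative ring. Then T(β_1,…,β_n) = ∑_{σ ∈ E_n} ∏_{i : σ(i) = i} β_i, where the sum is over all permutations σ of {1,…,n} that are products of disjoint transpositions of the form (l, l+1) (including the identity permutation), and the product is over the fixed points of σ. -/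
open Matrix BigOperators
open scoped Classical

/-!
Expand the determinant by the Leibniz formula. The entry `triT β (σ i) i` vanishes unless
`σ i` and `i` differ by at most one, and a permutation moving every point by at most one is an
involution, hence a product of disjoint e-transpositions: only `σ ∈ E_n` contribute. If `σ` is a
product of `k` disjoint e-transpositions, each of its 2-cycles `(l, l+1)` contributes
`triT β (l+1) l * triT β l (l+1) = -1`, which cancels against `sign σ = (-1)^k`, leaving the
product of the `β i` over the fixed points.
-/

/-- The `n × n` tridiagonal matrix with diagonal `β 0, …, β (n-1)`, superdiagonal entries `-1`
and subdiagonal entries `1`; `T(β_1,…,β_n)` in the paper is its determinant. -/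
def triT {n : ℕ} {R : Type*} [CommRing R] (β : Fin n → R) : Matrix (Fin n) (Fin n) R :=
  Matrix.of fun i j =>
    if i = j then β i
    else if i.val + 1 = j.val then -1
    else if j.val + 1 = i.val then 1
    else 0

/-- The e-transposition `(l, l+1)` (0-indexed: it swaps positions `l` and `l+1`). -/
def eTrans {n : ℕ} (l : ℕ) (h : l + 1 < n) : Equiv.Perm (Fin n) :=
  Equiv.swap ⟨l, Nat.lt_of_succ_lt h⟩ ⟨l + 1, h⟩

/-- `σ ∈ E_n`: `σ` is a product of pairwise disjoint e-transpositions (the empty product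
being the identity permutation). -/
def IsEProd {n : ℕ} (σ : Equiv.Perm (Fin n)) : Prop :=
  ∃ L : List {l : ℕ // l + 1 < n},
    L.Pairwise (fun a b => a.val ≠ b.val ∧ a.val + 1 ≠ b.val ∧ b.val + 1 ≠ a.val) ∧
      σ = (L.map fun l => eTrans l.1 l.2).prod

open Finset Equiv Equiv.Perm

section

variable {n : ℕ}

def lowPt (l : {l : ℕ // l + 1 < n}) : Fin n := ⟨l, Nat.lt_of_succ_lt l.2⟩

def highPt (l : {l : ℕ // l + 1 < n}) : Fin n := ⟨l + 1, l.2⟩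

@[simp] theorem val_lowPt (l : {l : ℕ // l + 1 < n}) : (lowPt l : ℕ) = l := rfl

@[simp] theorem val_highPt (l : {l : ℕ // l + 1 < n}) : (highPt l : ℕ) = l + 1 := rfl

theorem lowPt_ne_highPt (l : {l : ℕ // l + 1 < n}) : lowPt l ≠ highPt l := by
  simp [Fin.ext_iff]

def eProd (L : List {l : ℕ // l + 1 < n}) : Perm (Fin n) :=
  (L.map fun l => eTrans l.1 l.2).prod

theorem eProd_cons (l : {l : ℕ // l + 1 < n}) (L : List {l : ℕ // l + 1 < n}) :
    eProd (l :: L) = swap (lowPt l) (highPt l) * eProd L :=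
  rfl

def EDisjoint (a b : {l : ℕ // l + 1 < n}) : Prop :=
  a.val ≠ b.val ∧ a.val + 1 ≠ b.val ∧ b.val + 1 ≠ a.val

theorem EDisjoint.symm {a b : {l : ℕ // l + 1 < n}} (h : EDisjoint a b) : EDisjoint b a :=
  ⟨h.1.symm, h.2.2, h.2.1⟩

instance : Std.Symm (EDisjoint (n := n)) :=
  ⟨fun _ _ h => h.symm⟩

theorem EDisjoint.disjoint {a b : {l : ℕ // l + 1 < n}} (h : EDisjoint a b) :
    Disjoint ({lowPt a, highPt a} : Finset (Fin n)) {lowPt b, highPt b} := by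
  obtain ⟨h₁, h₂, h₃⟩ := h
  simp [Fin.ext_iff]
  omega

theorem isEProd_iff {σ : Perm (Fin n)} :
    IsEProd σ ↔ ∃ L : List {l : ℕ // l + 1 < n}, L.Pairwise EDisjoint ∧ σ = eProd L :=
  Iff.rfl

theorem swap_apply_of_notMem_pair {α : Type*} [DecidableEq α] {x y z : α}
    (h : z ∉ ({x, y} : Finset α)) :
    swap x y z = z := by
  simp only [mem_insert, mem_singleton, not_or] at h
  exact swap_apply_of_ne_of_ne h.1 h.2

theorem eProd_apply_of_forall_notMem {L : List {l : ℕ // l + 1 < n}} {x : Fin n}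
    (hx : ∀ l ∈ L, x ∉ ({lowPt l, highPt l} : Finset (Fin n))) : eProd L x = x := by
  induction L with
  | nil => rfl
  | cons a L ih =>
    rw [eProd_cons, Perm.mul_apply, ih fun l hl => hx l (List.mem_cons_of_mem a hl),
      swap_apply_of_notMem_pair (hx a List.mem_cons_self)]

theorem eProd_apply_lowPt_and_highPt {L : List {l : ℕ // l + 1 < n}} (hL : L.Pairwise EDisjoint)
    {l : {l : ℕ // l + 1 < n}} (hl : l ∈ L) :
    eProd L (lowPt l) = highPt l ∧ eProd L (highPt l) = lowPt l := by
  induction L with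
  | nil => cases hl
  | cons a L ih =>
    rw [List.pairwise_cons] at hL
    rw [eProd_cons, Perm.mul_apply, Perm.mul_apply]
    rcases List.mem_cons.mp hl with rfl | hl
    · have hfix : ∀ x ∈ ({lowPt l, highPt l} : Finset (Fin n)), eProd L x = x :=
        fun x hx => eProd_apply_of_forall_notMem fun b hb =>
          disjoint_left.mp (hL.1 b hb).disjoint hx
      rw [hfix _ (by simp), hfix _ (by simp), swap_apply_left, swap_apply_right]
      exact ⟨rfl, rfl⟩
    · have hfix : ∀ x ∈ ({lowPt l, highPt l} : Finset (Fin n)), swap (lowPt a) (highPt a) x = x :=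
        fun x hx => swap_apply_of_notMem_pair (disjoint_left.mp (hL.1 l hl).symm.disjoint hx)
      obtain ⟨hlow, hhigh⟩ := ih hL.2 hl
      rw [hlow, hhigh, hfix _ (by simp), hfix _ (by simp)]
      exact ⟨rfl, rfl⟩

theorem sign_eProd (L : List {l : ℕ // l + 1 < n}) : sign (eProd L) = (-1) ^ L.length := by
  induction L with
  | nil => simp [eProd]
  | cons a L ih =>
    rw [eProd_cons, Perm.sign_mul, sign_swap (lowPt_ne_highPt a), ih, List.length_cons, pow_succ']

theorem support_eProd {L : List {l : ℕ // l + 1 < n}} (hL : L.Pairwise EDisjoint) :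
    (eProd L).support = L.toFinset.biUnion fun l => {lowPt l, highPt l} := by
  ext x
  simp only [mem_support, mem_biUnion, List.mem_toFinset]
  constructor
  · intro hx
    by_contra! h
    exact hx (eProd_apply_of_forall_notMem h)
  · rintro ⟨l, hl, hx⟩
    obtain ⟨hlow, hhigh⟩ := eProd_apply_lowPt_and_highPt hL hl
    rcases mem_insert.mp hx with rfl | hx
    · rw [hlow]; exact (lowPt_ne_highPt l).symm
    · rw [mem_singleton.mp hx, hhigh]; exact lowPt_ne_highPt l

theorem prod_eProd_apply {M : Type*} [CommMonoid M] (f : Fin n → Fin n → M)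
    {L : List {l : ℕ // l + 1 < n}} (hL : L.Pairwise EDisjoint) :
    ∏ i, f (eProd L i) i = (∏ i ∈ univ.filter (fun i => eProd L i = i), f i i) *
      ∏ l ∈ L.toFinset, f (highPt l) (lowPt l) * f (lowPt l) (highPt l) := by
  rw [← prod_filter_mul_prod_filter_not univ (fun i => eProd L i = i)]
  congr 1
  · exact prod_congr rfl fun i hi => by rw [(mem_filter.mp hi).2]
  · have hdisj : (L.toFinset : Set {l : ℕ // l + 1 < n}).PairwiseDisjoint
        fun l => ({lowPt l, highPt l} : Finset (Fin n)) := by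
      intro a ha b hb hab
      exact (hL.forall (List.mem_toFinset.mp ha) (List.mem_toFinset.mp hb) hab).disjoint
    rw [show univ.filter (fun i => ¬eProd L i = i) = (eProd L).support from rfl,
      support_eProd hL, prod_biUnion hdisj]
    refine prod_congr rfl fun l hl => ?_
    obtain ⟨hlow, hhigh⟩ := eProd_apply_lowPt_and_highPt hL (List.mem_toFinset.mp hl)
    rw [prod_pair (lowPt_ne_highPt l), hlow, hhigh]

def MovesAtMostOne (σ : Perm (Fin n)) : Prop :=
  ∀ i, (σ i : ℕ) ≤ i + 1 ∧ (i : ℕ) ≤ σ i + 1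

namespace MovesAtMostOne

variable {σ : Perm (Fin n)}

theorem apply_apply (hσ : MovesAtMostOne σ) (i : Fin n) : σ (σ i) = i := by
  obtain ⟨i, hi⟩ := i
  induction i using Nat.strong_induction_on with
  | _ i ih =>
    set x : Fin n := ⟨i, hi⟩
    have hx : (x : ℕ) = i := rfl
    rcases lt_trichotomy (σ x : ℕ) i with hdown | hfix | hup
    · exact σ.injective (ih _ hdown _)
    · rw [show σ x = x from Fin.ext hfix, show σ x = x from Fin.ext hfix]
    · -- the preimage `k` of `x` is `x - 1`, `x` or `x + 1`; only the last is possible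
      set k := σ.symm x
      have hσk : σ k = x := σ.apply_symm_apply x
      have hk := hσ k
      have hσx := hσ x
      rw [hσk] at hk
      rcases lt_trichotomy (k : ℕ) i with hlt | heq | hgt
      · have := congrArg Fin.val (ih k hlt k.isLt)
        simp only [Fin.eta, hσk] at this
        omega
      · rw [show k = x from Fin.ext heq] at hσk
        omega
      · rw [show σ x = k from Fin.ext (by omega), hσk]

theorem isEProd (hσ : MovesAtMostOne σ) : IsEProd σ := by
  -- the factors of `σ` are the `(l, l+1)` with `σ l = l + 1`
  set S := ((range n).subtype fun l => l + 1 < n).filter fun l => σ (lowPt l) = highPt l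
  have hS : ∀ l, l ∈ S ↔ σ (lowPt l) = highPt l := fun l => by
    simpa [S] using fun _ => Nat.lt_of_succ_lt l.2
  have hnext : ∀ a ∈ S, ∀ b ∈ S, a.val + 1 ≠ b.val := by
    intro a ha b hb hab
    have := congrArg Fin.val (hσ.apply_apply (lowPt a))
    rw [(hS a).mp ha, show highPt a = lowPt b from Fin.ext hab, (hS b).mp hb] at this
    simp only [val_highPt, val_lowPt] at this
    omega
  have hL : S.toList.Pairwise EDisjoint :=
    (nodup_toList S).pairwise_of_forall_ne fun a ha b hb hab => by
      rw [mem_toList] at ha hb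
      exact ⟨fun h => hab (Subtype.ext h), hnext a ha b hb, hnext b hb a ha⟩
  refine isEProd_iff.mpr ⟨S.toList, hL, Equiv.ext fun x => ?_⟩
  have hx := hσ x
  rcases lt_trichotomy (σ x : ℕ) x with hdown | hfix | hup
  · set l : {l : ℕ // l + 1 < n} := ⟨σ x, by omega⟩
    have hl : l ∈ S.toList := mem_toList.mpr <| (hS l).mpr <|
      (hσ.apply_apply x).trans (Fin.ext (by simp [l]; omega))
    conv_rhs => rw [show x = highPt l from Fin.ext (by simp [l]; omega),
      (eProd_apply_lowPt_and_highPt hL hl).2]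
    rfl
  · rw [Fin.ext hfix]
    refine (eProd_apply_of_forall_notMem fun l hl hxl => ?_).symm
    rw [mem_toList, hS] at hl
    rcases mem_insert.mp hxl with rfl | hxl
    · rw [hl] at hfix
      simp at hfix
    · rw [← mem_singleton.mp hxl, ← Fin.ext hfix] at hl
      exact lowPt_ne_highPt l (σ.injective hl ▸ mem_singleton.mp hxl)
  · set l : {l : ℕ // l + 1 < n} := ⟨x, by have := (σ x).isLt; omega⟩
    have hσl : σ (lowPt l) = highPt l := Fin.ext (show (σ x : ℕ) = x + 1 by omega)
    conv_rhs => rw [show x = lowPt l from rfl,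
      (eProd_apply_lowPt_and_highPt hL (mem_toList.mpr ((hS l).mpr hσl))).1]
    exact hσl

end MovesAtMostOne

variable {R : Type*} [CommRing R] (β : Fin n → R)

theorem triT_apply_self (i : Fin n) : triT β i i = β i := by
  simp [triT]

theorem triT_highPt_lowPt (l : {l : ℕ // l + 1 < n}) : triT β (highPt l) (lowPt l) = 1 := by
  simp [triT, Fin.ext_iff]
  omega

theorem triT_lowPt_highPt (l : {l : ℕ // l + 1 < n}) : triT β (lowPt l) (highPt l) = -1 := by
  simp [triT, Fin.ext_iff]

theorem triT_apply_eq_zero {i j : Fin n} (h : ¬((i : ℕ) ≤ j + 1 ∧ (j : ℕ) ≤ i + 1)) :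
    triT β i j = 0 := by
  simp only [triT, of_apply]
  split_ifs with h₁ h₂ h₃
  · subst h₁; omega
  · omega
  · omega
  · rfl

theorem prod_triT_apply_eq_zero {σ : Perm (Fin n)} (hσ : ¬MovesAtMostOne σ) :
    ∏ i, triT β (σ i) i = 0 := by
  obtain ⟨i, hi⟩ := not_forall.mp hσ
  exact prod_eq_zero (mem_univ i) (triT_apply_eq_zero β hi)

theorem sign_smul_prod_triT_eProd {L : List {l : ℕ // l + 1 < n}} (hL : L.Pairwise EDisjoint) :
    sign (eProd L) • ∏ i, triT β (eProd L i) i =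
      ∏ i ∈ univ.filter (fun i => eProd L i = i), β i := by
  have hcard : L.toFinset.card = L.length :=
    List.toFinset_card_of_nodup (hL.imp fun h heq => h.1 (congrArg Subtype.val heq))
  rw [prod_eProd_apply (triT β) hL]
  simp only [triT_apply_self, triT_highPt_lowPt, triT_lowPt_highPt,
    one_mul, prod_const, hcard, sign_eProd, Units.smul_def]
  rw [zsmul_eq_mul]
  push_cast
  rw [mul_left_comm, ← mul_pow, neg_one_mul, neg_neg, one_pow, mul_one]

end

theorem stmt16_general (n : ℕ) {R : Type*} [CommRing R] (β : Fin n → R) :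
    (triT β).det =
      ∑ σ ∈ Finset.univ.filter (fun σ : Equiv.Perm (Fin n) => IsEProd σ),
        ∏ i ∈ Finset.univ.filter (fun i : Fin n => σ i = i), β i := by
  rw [det_apply, ← sum_filter_add_sum_filter_not univ (fun σ : Perm (Fin n) => IsEProd σ)]
  have hvanish : ∑ σ ∈ univ.filter (fun σ : Perm (Fin n) => ¬IsEProd σ),
      sign σ • ∏ i, triT β (σ i) i = 0 :=
    sum_eq_zero fun σ hσ => by
      rw [prod_triT_apply_eq_zero β (mt MovesAtMostOne.isEProd (mem_filter.mp hσ).2), smul_zero]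
  rw [hvanish, add_zero]
  refine sum_congr rfl fun σ hσ => ?_
  obtain ⟨L, hL, rfl⟩ := isEProd_iff.mp (mem_filter.mp hσ).2
  exact sign_smul_prod_triT_eProd β hL

/-- the tridiagonal determinant `T(β_1,…,β_n)` equals
`∑_{σ ∈ E_n} ∏_{i : σ(i) = i} β_i`. -/
theorem stmt16 (n : ℕ) (hn : 1 ≤ n) {R : Type*} [CommRing R] (β : Fin n → R) :
    (triT β).det =
      ∑ σ ∈ Finset.univ.filter (fun σ : Equiv.Perm (Fin n) => IsEProd σ),
        ∏ i ∈ Finset.univ.filter (fun i : Fin n => σ i = i), β i :=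
  stmt16_general n β
end
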